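/- arXiv:2402.06493 — 6 statements merged into one kernel-verified Lean document; each statement's English description precedes it below -/
import Mathlib

section
/- Let w : ℝ³ → ℝ be a smooth, compactly supported function with n_w := ∫_{ℝ³} w(v) dv ≠ 0. Let u_w := (1/n_w) ∫_{ℝ³} v w(v) dv and θ_w := (1/(3 n_w)) ∫_{ℝ³} |v − u_w|² w(v) dv. Then ∫_{ℝ³} (1/2)|v|² ∇_v · ( (v − u_w) w(v) + θ_w ∇_v w(v) ) dv = 0. -/
open MeasureTheory

noncomputable section

local notation "E3" => EuclideanSpace ℝ (Fin 3)

/-- The divergence of a vector field on ℝ³. -/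
def div3 (F : EuclideanSpace ℝ (Fin 3) → EuclideanSpace ℝ (Fin 3))
    (v : EuclideanSpace ℝ (Fin 3)) : ℝ :=
  ∑ i : Fin 3, fderiv ℝ F v (EuclideanSpace.single i 1) i

namespace LBaux

/-- Integration by parts for smooth functions, second factor compactly supported. -/
lemma ibp {f g : E3 → ℝ} (hf : ContDiff ℝ (⊤ : ℕ∞) f) (hg : ContDiff ℝ (⊤ : ℕ∞) g)
    (hgs : HasCompactSupport g) (e : E3) :
    ∫ v : E3, f v * fderiv ℝ g v e = - ∫ v : E3, fderiv ℝ f v e * g v := by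
  have hg'c : Continuous fun v : E3 => fderiv ℝ g v e :=
    (hg.continuous_fderiv (by simp)).clm_apply continuous_const
  have hf'c : Continuous fun v : E3 => fderiv ℝ f v e :=
    (hf.continuous_fderiv (by simp)).clm_apply continuous_const
  have hg's : HasCompactSupport fun v : E3 => fderiv ℝ g v e := by
    exact (hgs.fderiv ℝ).comp_left (g := fun L : E3 →L[ℝ] ℝ => L e) rfl
  apply integral_mul_fderiv_eq_neg_fderiv_mul_of_integrable
  · exact ((hf'c.mul hg.continuous).integrable_of_hasCompactSupport hgs.mul_left)
  · exact ((hf.continuous.mul hg'c).integrable_of_hasCompactSupport hg's.mul_left)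
  · exact ((hf.continuous.mul hg.continuous).integrable_of_hasCompactSupport hgs.mul_left)
  · exact fun x _ => hf.differentiable (by simp) x
  · exact fun x _ => hg.differentiable (by simp) x

lemma grad_coord (f : E3 → ℝ) (v : E3) (i : Fin 3) :
    gradient f v i = fderiv ℝ f v (EuclideanSpace.single i 1) := by
  have h : (inner ℝ (gradient f v) (EuclideanSpace.single i (1:ℝ)) : ℝ)
      = fderiv ℝ f v (EuclideanSpace.single i 1) :=
    InnerProductSpace.toDual_symm_apply
  rw [← h, EuclideanSpace.inner_single_right]
  simp

lemma coord_contDiff (i : Fin 3) : ContDiff ℝ (⊤ : ℕ∞) (fun v : E3 => v i) :=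
  (EuclideanSpace.proj (𝕜 := ℝ) i).contDiff

lemma coord_fderiv (i j : Fin 3) (v : E3) :
    fderiv ℝ (fun v : E3 => v i) v (EuclideanSpace.single j 1)
      = if j = i then 1 else 0 := by
  have : fderiv ℝ (fun v : E3 => v i) v = EuclideanSpace.proj (𝕜 := ℝ) i :=
    (EuclideanSpace.proj (𝕜 := ℝ) i).fderiv
  rw [this]
  simp [EuclideanSpace.single_apply, eq_comm]

/-- fderiv of half norm squared. -/
lemma phi_fderiv (v : E3) (i : Fin 3) :
    fderiv ℝ (fun v : E3 => (1/2 : ℝ) * ‖v‖ ^ 2) v (EuclideanSpace.single i 1) = v i := by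
  have h1 : HasFDerivAt (fun v : E3 => ‖v‖ ^ 2)
      (2 • (innerSL ℝ v).comp (ContinuousLinearMap.id ℝ E3)) v :=
    (hasFDerivAt_id v).norm_sq
  have h2 : HasFDerivAt (fun v : E3 => (1/2 : ℝ) * ‖v‖ ^ 2)
      ((1/2 : ℝ) • (2 • (innerSL ℝ v).comp (ContinuousLinearMap.id ℝ E3))) v :=
    h1.const_smul (1/2 : ℝ)
  rw [h2.fderiv]
  simp [EuclideanSpace.inner_single_right, real_inner_comm]

lemma norm_sq_eq (x : E3) : ‖x‖ ^ 2 = ∑ i : Fin 3, (x i) ^ 2 := by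
  rw [EuclideanSpace.norm_eq, Real.sq_sqrt (Finset.sum_nonneg fun i _ => sq_nonneg _)]
  simp [Real.norm_eq_abs, sq_abs]

lemma integrable_mul_left {f g : E3 → ℝ} (hf : Continuous f) (hg : Continuous g)
    (hgs : HasCompactSupport g) : Integrable (fun v : E3 => f v * g v) :=
  (hf.mul hg).integrable_of_hasCompactSupport hgs.mul_left

lemma integrable_mul_right {f g : E3 → ℝ} (hf : Continuous f) (hg : Continuous g)
    (hgs : HasCompactSupport g) : Integrable (fun v : E3 => g v * f v) :=
  (hg.mul hf).integrable_of_hasCompactSupport hgs.mul_right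

end LBaux

/-- For smooth, compactly supported `w : ℝ³ → ℝ` with nonzero mass,
self-consistent bulk velocity `u_w` and self-consistent temperature `θ_w`, the
Lenard–Bernstein operator conserves energy:
`∫ (1/2)|v|² ∇_v · ((v − u_w) w + θ_w ∇_v w) dv = 0`. -/
theorem lenardBernstein_energy_conservation
    (w : E3 → ℝ) (hw : ContDiff ℝ (⊤ : ℕ∞) w) (hsupp : HasCompactSupport w)
    (n θw : ℝ) (uw : E3)
    (hn_def : n = ∫ v : E3, w v) (hn : n ≠ 0)
    (hu_def : uw = n⁻¹ • ∫ v : E3, w v • v)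
    (hθ_def : θw = (1 / (3 * n)) * ∫ v : E3, ‖v - uw‖ ^ 2 * w v) :
    (∫ v : E3, (1 / 2) * ‖v‖ ^ 2 *
        div3 (fun v' => w v' • (v' - uw) + θw • gradient w v') v) = 0 := by
  classical
  open LBaux in
  have hφ : ContDiff ℝ (⊤ : ℕ∞) (fun v : E3 => (1/2 : ℝ) * ‖v‖ ^ 2) :=
    contDiff_const.mul (contDiff_norm_sq ℝ)
  -- gradient of w is smooth
  have hgradw : ContDiff ℝ (⊤ : ℕ∞) (gradient w) := by
    have h : gradient w = fun v => (InnerProductSpace.toDual ℝ E3).symm (fderiv ℝ w v) := rfl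
    rw [h]
    exact (InnerProductSpace.toDual ℝ E3).symm.contDiff.comp (hw.fderiv_right (by simp))
  set F : E3 → E3 := fun v' => w v' • (v' - uw) + θw • gradient w v' with hFdef
  have hF : ContDiff ℝ (⊤ : ℕ∞) F :=
    (hw.smul (contDiff_id.sub contDiff_const)).add (hgradw.const_smul θw)
  -- scalar components of F
  set g : Fin 3 → E3 → ℝ :=
    fun i v => w v * (v i - uw i) + θw * fderiv ℝ w v (EuclideanSpace.single i 1) with hgdef
  have hgsm : ∀ i, ContDiff ℝ (⊤ : ℕ∞) (g i) := fun i =>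
    (hw.mul ((coord_contDiff i).sub contDiff_const)).add
      (contDiff_const.mul ((hw.fderiv_right (by simp)).clm_apply contDiff_const))
  have hfw : ∀ i, HasCompactSupport fun v : E3 => fderiv ℝ w v (EuclideanSpace.single i 1) :=
    fun i => (hsupp.fderiv ℝ).comp_left (g := fun L : E3 →L[ℝ] ℝ => L (EuclideanSpace.single i 1)) rfl
  have hgs : ∀ i, HasCompactSupport (g i) := fun i =>
    (hsupp.mul_right : HasCompactSupport fun v => w v * (v i - uw i)).add
      ((hfw i).mul_left : HasCompactSupport fun v => θw * fderiv ℝ w v (EuclideanSpace.single i 1))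
  have hFi : ∀ i, (fun v : E3 => F v i) = g i := by
    intro i
    funext v
    simp only [hFdef, hgdef, PiLp.add_apply, PiLp.smul_apply, PiLp.sub_apply, smul_eq_mul,
      grad_coord]
  -- divergence in terms of scalar components
  have hdiv : ∀ v : E3, div3 F v = ∑ i : Fin 3, fderiv ℝ (g i) v (EuclideanSpace.single i 1) := by
    intro v
    unfold div3
    refine Finset.sum_congr rfl fun i _ => ?_
    have hFd : DifferentiableAt ℝ F v := (hF.differentiable (by simp)) v
    have h1 : fderiv ℝ (fun v' : E3 => F v' i) v
        = (EuclideanSpace.proj (𝕜 := ℝ) i).comp (fderiv ℝ F v) :=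
      ((EuclideanSpace.proj (𝕜 := ℝ) i).hasFDerivAt.comp v hFd.hasFDerivAt).fderiv
    calc fderiv ℝ F v (EuclideanSpace.single i 1) i
        = ((EuclideanSpace.proj (𝕜 := ℝ) i).comp (fderiv ℝ F v)) (EuclideanSpace.single i 1) := rfl
      _ = fderiv ℝ (fun v' : E3 => F v' i) v (EuclideanSpace.single i 1) := by rw [h1]
      _ = fderiv ℝ (g i) v (EuclideanSpace.single i 1) := by rw [hFi i]
  -- integrability of w-type products
  have hwc := hw.continuous
  have hfwc : ∀ i, Continuous fun v : E3 => fderiv ℝ w v (EuclideanSpace.single i 1) :=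
    fun i => (hw.continuous_fderiv (by simp)).clm_apply continuous_const
  -- key one-dimensional integrals
  have hmass : (∫ v : E3, w v) = n := hn_def.symm
  have hIi1 : ∀ i : Fin 3, (∫ v : E3, v i * fderiv ℝ w v (EuclideanSpace.single i 1)) = -n := by
    intro i
    rw [ibp (coord_contDiff i) hw hsupp (EuclideanSpace.single i 1)]
    have : ∀ v : E3, fderiv ℝ (fun v : E3 => v i) v (EuclideanSpace.single i 1) * w v = w v := by
      intro v; rw [coord_fderiv]; simp
    rw [integral_congr_ae (Filter.Eventually.of_forall this), hmass]
  have hint_smul : Integrable (fun v : E3 => w v • v) :=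
    (hwc.smul continuous_id).integrable_of_hasCompactSupport hsupp.smul_right
  have hImom : ∀ i : Fin 3, (∫ v : E3, w v * v i) = n * uw i := by
    intro i
    have hI : (∫ v : E3, w v • v) = n • uw := by
      rw [hu_def, smul_inv_smul₀ hn]
    have := (EuclideanSpace.proj (𝕜 := ℝ) i).integral_comp_comm hint_smul
    simp only [hI] at this
    calc (∫ v : E3, w v * v i) = ∫ v : E3, EuclideanSpace.proj (𝕜 := ℝ) i (w v • v) := by
          refine integral_congr_ae (Filter.Eventually.of_forall fun v => ?_)
          simp [smul_eq_mul]
      _ = EuclideanSpace.proj (𝕜 := ℝ) i (n • uw) := this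
      _ = n * uw i := by simp [smul_eq_mul]
  have hIsq : (∑ i : Fin 3, ∫ v : E3, w v * (v i - uw i) ^ 2) = 3 * n * θw := by
    rw [← integral_finset_sum _ (fun i _ =>
      integrable_mul_right (f := fun v : E3 => (v i - uw i) ^ 2) (((coord_contDiff i).sub contDiff_const).continuous.pow 2) hwc hsupp)]
    have heq : ∀ v : E3, (∑ i : Fin 3, w v * (v i - uw i) ^ 2) = ‖v - uw‖ ^ 2 * w v := by
      intro v
      rw [← Finset.mul_sum, norm_sq_eq, mul_comm]
      try simp [PiLp.sub_apply]
    rw [integral_congr_ae (Filter.Eventually.of_forall heq)]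
    have h3n : (3 : ℝ) * n ≠ 0 := by
      simpa using hn
    rw [hθ_def]
    field_simp
    try ring
  -- value of each coordinate integral
  have hJ : ∀ i : Fin 3, (∫ v : E3, v i * g i v)
      = (∫ v : E3, w v * (v i - uw i) ^ 2) - θw * n := by
    intro i
    have hA : Integrable (fun v : E3 => w v * (v i - uw i) ^ 2) :=
      integrable_mul_right (((coord_contDiff i).sub contDiff_const).continuous.pow 2) hwc hsupp
    have hB : Integrable (fun v : E3 => uw i * (w v * (v i - uw i))) :=
      Integrable.const_mul
        (integrable_mul_right ((coord_contDiff i).sub contDiff_const).continuous hwc hsupp) _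
    have hC : Integrable (fun v : E3 => θw * (v i * fderiv ℝ w v (EuclideanSpace.single i 1))) :=
      Integrable.const_mul
        (integrable_mul_left (coord_contDiff i).continuous (hfwc i) (hfw i)) _
    have hsplit : ∀ v : E3, v i * g i v
        = (w v * (v i - uw i) ^ 2 + uw i * (w v * (v i - uw i)))
          + θw * (v i * fderiv ℝ w v (EuclideanSpace.single i 1)) := by
      intro v; simp only [hgdef]; ring
    have hAB : Integrable (fun v : E3 =>
        w v * (v i - uw i) ^ 2 + uw i * (w v * (v i - uw i))) := hA.add hB
    rw [integral_congr_ae (Filter.Eventually.of_forall hsplit),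
      integral_add hAB hC, integral_add hA hB, integral_const_mul, integral_const_mul]
    have hB0 : (∫ v : E3, w v * (v i - uw i)) = 0 := by
      have : ∀ v : E3, w v * (v i - uw i) = w v * v i - uw i * w v := by intro v; ring
      rw [integral_congr_ae (Filter.Eventually.of_forall this),
        integral_sub (integrable_mul_right (coord_contDiff i).continuous hwc hsupp)
          ((hwc.integrable_of_hasCompactSupport hsupp).const_mul _),
        hImom i, integral_const_mul, hmass]
      ring
    rw [hB0, hIi1 i]
    ring
  -- put everything together
  have hintg : ∀ i : Fin 3,
      Integrable (fun v : E3 => (1/2 : ℝ) * ‖v‖ ^ 2 * fderiv ℝ (g i) v (EuclideanSpace.single i 1)) := by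
    intro i
    have hc : Continuous fun v : E3 => fderiv ℝ (g i) v (EuclideanSpace.single i 1) :=
      ((hgsm i).continuous_fderiv (by simp)).clm_apply continuous_const
    have hs : HasCompactSupport fun v : E3 => fderiv ℝ (g i) v (EuclideanSpace.single i 1) :=
      ((hgs i).fderiv ℝ).comp_left (g := fun L : E3 →L[ℝ] ℝ => L (EuclideanSpace.single i 1)) rfl
    exact integrable_mul_left (hφ.continuous) hc hs
  calc (∫ v : E3, (1/2 : ℝ) * ‖v‖ ^ 2 * div3 F v)
      = ∫ v : E3, ∑ i : Fin 3,
          (1/2 : ℝ) * ‖v‖ ^ 2 * fderiv ℝ (g i) v (EuclideanSpace.single i 1) := by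
        refine integral_congr_ae (Filter.Eventually.of_forall fun v => ?_)
        show (1/2 : ℝ) * ‖v‖ ^ 2 * div3 F v = _
        rw [hdiv v, Finset.mul_sum]
    _ = ∑ i : Fin 3, ∫ v : E3,
          (1/2 : ℝ) * ‖v‖ ^ 2 * fderiv ℝ (g i) v (EuclideanSpace.single i 1) :=
        integral_finset_sum _ fun i _ => hintg i
    _ = ∑ i : Fin 3, - ∫ v : E3, v i * g i v := by
        refine Finset.sum_congr rfl fun i _ => ?_
        rw [ibp hφ (hgsm i) (hgs i) (EuclideanSpace.single i 1)]
        congr 1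
        refine integral_congr_ae (Filter.Eventually.of_forall fun v => ?_)
        show fderiv ℝ (fun v : E3 => (1/2 : ℝ) * ‖v‖ ^ 2) v (EuclideanSpace.single i 1) * g i v
          = v i * g i v
        rw [phi_fderiv]
    _ = - ∑ i : Fin 3, ((∫ v : E3, w v * (v i - uw i) ^ 2) - θw * n) := by
        rw [← Finset.sum_neg_distrib]
        exact Finset.sum_congr rfl fun i _ => by rw [hJ i]
    _ = 0 := by
        rw [Finset.sum_sub_distrib, hIsq, Finset.sum_const]
        simp only [Finset.card_univ, Fintype.card_fin, nsmul_eq_mul, Nat.cast_ofNat]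
        ring
end
end

section
/- Let f : ℝ³ → ℝ be smooth and compactly supported, let u ∈ ℝ and θ ∈ ℝ, and set ū := (u, 0, 0) ∈ ℝ³. Define g₁(s) := ∫_{ℝ²} f(s, v_y, v_z) dv_y dv_z. Then for every s ∈ ℝ, ∫_{ℝ²} [ ∇_v · ( (v − ū) f(v) + θ ∇_v f(v) ) ]_{v=(s,v_y,v_z)} dv_y dv_z = d/ds ( (s − u) g₁(s) + θ g₁′(s) ). -/
open MeasureTheory

noncomputable section

/-- Partial derivative in the first velocity coordinate. -/
def D1 (f : ℝ × ℝ × ℝ → ℝ) (v : ℝ × ℝ × ℝ) : ℝ :=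
  deriv (fun s => f (s, v.2.1, v.2.2)) v.1

/-- Partial derivative in the second velocity coordinate. -/
def D2 (f : ℝ × ℝ × ℝ → ℝ) (v : ℝ × ℝ × ℝ) : ℝ :=
  deriv (fun s => f (v.1, s, v.2.2)) v.2.1

/-- Partial derivative in the third velocity coordinate. -/
def D3 (f : ℝ × ℝ × ℝ → ℝ) (v : ℝ × ℝ × ℝ) : ℝ :=
  deriv (fun s => f (v.1, v.2.1, s)) v.2.2

/-- The divergence `∇_v · ((v − ū) f + θ ∇_v f)` of the Lenard–Bernstein flux with bulk
velocity `ū = (u, 0, 0)` and temperature `θ`. -/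
def lbDiv (f : ℝ × ℝ × ℝ → ℝ) (u θ : ℝ) (v : ℝ × ℝ × ℝ) : ℝ :=
  D1 (fun w => (w.1 - u) * f w + θ * D1 f w) v
    + D2 (fun w => w.2.1 * f w + θ * D2 f w) v
    + D3 (fun w => w.2.2 * f w + θ * D3 f w) v

namespace ChuAux

variable {F : ℝ × ℝ × ℝ → ℝ}

lemma D1_eq (hF : Differentiable ℝ F) (v : ℝ × ℝ × ℝ) :
    D1 F v = fderiv ℝ F v (1, 0, 0) := by
  obtain ⟨t, y, z⟩ := v
  have hline : HasDerivAt (fun s : ℝ => (s, y, z)) ((1 : ℝ), (0 : ℝ), (0 : ℝ)) t :=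
    (hasDerivAt_id t).prodMk (hasDerivAt_const t (y, z))
  exact ((hF (t, y, z)).hasFDerivAt.comp_hasDerivAt t hline).deriv

lemma D2_eq (hF : Differentiable ℝ F) (v : ℝ × ℝ × ℝ) :
    D2 F v = fderiv ℝ F v (0, 1, 0) := by
  obtain ⟨t, y, z⟩ := v
  have hline : HasDerivAt (fun s : ℝ => (t, s, z)) ((0 : ℝ), (1 : ℝ), (0 : ℝ)) y :=
    (hasDerivAt_const y t).prodMk ((hasDerivAt_id y).prodMk (hasDerivAt_const y z))
  exact ((hF (t, y, z)).hasFDerivAt.comp_hasDerivAt y hline).deriv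

lemma D3_eq (hF : Differentiable ℝ F) (v : ℝ × ℝ × ℝ) :
    D3 F v = fderiv ℝ F v (0, 0, 1) := by
  obtain ⟨t, y, z⟩ := v
  have hline : HasDerivAt (fun s : ℝ => (t, y, s)) ((0 : ℝ), (0 : ℝ), (1 : ℝ)) z :=
    (hasDerivAt_const z t).prodMk ((hasDerivAt_const z y).prodMk (hasDerivAt_id z))
  exact ((hF (t, y, z)).hasFDerivAt.comp_hasDerivAt z hline).deriv

lemma contDiff_D1 (hF : ContDiff ℝ (⊤ : ℕ∞) F) : ContDiff ℝ (⊤ : ℕ∞) (D1 F) := by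
  have : D1 F = fun v => fderiv ℝ F v (1, 0, 0) :=
    funext (D1_eq (hF.differentiable (by simp)))
  rw [this]
  exact (hF.fderiv_right (by simp)).clm_apply contDiff_const

lemma contDiff_D2 (hF : ContDiff ℝ (⊤ : ℕ∞) F) : ContDiff ℝ (⊤ : ℕ∞) (D2 F) := by
  have : D2 F = fun v => fderiv ℝ F v (0, 1, 0) :=
    funext (D2_eq (hF.differentiable (by simp)))
  rw [this]
  exact (hF.fderiv_right (by simp)).clm_apply contDiff_const

lemma contDiff_D3 (hF : ContDiff ℝ (⊤ : ℕ∞) F) : ContDiff ℝ (⊤ : ℕ∞) (D3 F) := by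
  have : D3 F = fun v => fderiv ℝ F v (0, 0, 1) :=
    funext (D3_eq (hF.differentiable (by simp)))
  rw [this]
  exact (hF.fderiv_right (by simp)).clm_apply contDiff_const

lemma hcs_D1 (hF : Differentiable ℝ F) (hs : HasCompactSupport F) :
    HasCompactSupport (D1 F) := by
  have : D1 F = fun v => fderiv ℝ F v (1, 0, 0) := funext (D1_eq hF)
  rw [this]
  exact hs.fderiv_apply ℝ (1, 0, 0)

lemma hcs_D2 (hF : Differentiable ℝ F) (hs : HasCompactSupport F) :
    HasCompactSupport (D2 F) := by
  have : D2 F = fun v => fderiv ℝ F v (0, 1, 0) := funext (D2_eq hF)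
  rw [this]
  exact hs.fderiv_apply ℝ (0, 1, 0)

lemma hcs_D3 (hF : Differentiable ℝ F) (hs : HasCompactSupport F) :
    HasCompactSupport (D3 F) := by
  have : D3 F = fun v => fderiv ℝ F v (0, 0, 1) := funext (D3_eq hF)
  rw [this]
  exact hs.fderiv_apply ℝ (0, 0, 1)

lemma slice23_hcs (hs : HasCompactSupport F) (s : ℝ) :
    HasCompactSupport (fun p : ℝ × ℝ => F (s, p.1, p.2)) := by
  obtain ⟨R, hR⟩ := hs.isCompact.isBounded.subset_closedBall 0
  apply HasCompactSupport.intro (isCompact_closedBall (0 : ℝ × ℝ) R)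
  intro p hp
  apply image_eq_zero_of_notMem_tsupport
  intro hmem
  apply hp
  have h1 := hR hmem
  simp only [Metric.mem_closedBall, dist_zero_right] at h1 ⊢
  exact le_trans (norm_snd_le ((s, p.1, p.2) : ℝ × ℝ × ℝ)) h1

lemma slice2_hcs (hs : HasCompactSupport F) (s z : ℝ) :
    HasCompactSupport (fun t : ℝ => F (s, t, z)) := by
  obtain ⟨R, hR⟩ := hs.isCompact.isBounded.subset_closedBall 0
  apply HasCompactSupport.intro (isCompact_closedBall (0 : ℝ) R)
  intro t ht
  apply image_eq_zero_of_notMem_tsupport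
  intro hmem
  apply ht
  have h1 := hR hmem
  simp only [Metric.mem_closedBall, dist_zero_right] at h1 ⊢
  exact le_trans (le_trans (norm_fst_le ((t, z) : ℝ × ℝ))
    (norm_snd_le ((s, t, z) : ℝ × ℝ × ℝ))) h1

lemma slice3_hcs (hs : HasCompactSupport F) (s y : ℝ) :
    HasCompactSupport (fun t : ℝ => F (s, y, t)) := by
  obtain ⟨R, hR⟩ := hs.isCompact.isBounded.subset_closedBall 0
  apply HasCompactSupport.intro (isCompact_closedBall (0 : ℝ) R)
  intro t ht
  apply image_eq_zero_of_notMem_tsupport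
  intro hmem
  apply ht
  have h1 := hR hmem
  simp only [Metric.mem_closedBall, dist_zero_right] at h1 ⊢
  exact le_trans (le_trans (norm_snd_le ((y, t) : ℝ × ℝ))
    (norm_snd_le ((s, y, t) : ℝ × ℝ × ℝ))) h1

lemma slice23_cont (hF : Continuous F) (s : ℝ) :
    Continuous (fun p : ℝ × ℝ => F (s, p.1, p.2)) :=
  hF.comp (continuous_const.prodMk (continuous_fst.prodMk continuous_snd))

lemma slice23_integrable (hF : Continuous F) (hs : HasCompactSupport F) (s : ℝ) :
    Integrable (fun p : ℝ × ℝ => F (s, p.1, p.2)) :=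
  (slice23_cont hF s).integrable_of_hasCompactSupport (slice23_hcs hs s)

lemma integral_deriv_zero {g : ℝ → ℝ} (hg : ContDiff ℝ 1 g) (hsg : HasCompactSupport g) :
    ∫ y : ℝ, deriv g y = 0 := by
  have hint : Integrable (deriv g) :=
    (hg.continuous_deriv le_rfl).integrable_of_hasCompactSupport hsg.deriv
  rw [← intervalIntegral.integral_Iic_add_Ioi (b := 0) hint.integrableOn hint.integrableOn,
    HasCompactSupport.integral_Iic_deriv_eq hg hsg 0,
    HasCompactSupport.integral_Ioi_deriv_eq hg hsg 0]
  ring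

/-- The transverse integral of `D2` of a smooth compactly supported function vanishes. -/
lemma integral_D2_zero (hF : ContDiff ℝ (⊤ : ℕ∞) F) (hs : HasCompactSupport F) (s : ℝ) :
    ∫ p : ℝ × ℝ, D2 F (s, p.1, p.2) = 0 := by
  have hint : Integrable (fun p : ℝ × ℝ => D2 F (s, p.1, p.2)) :=
    slice23_integrable (contDiff_D2 hF).continuous
      (hcs_D2 (hF.differentiable (by simp)) hs) s
  rw [Measure.volume_eq_prod] at hint ⊢
  rw [integral_prod_symm _ hint]
  have : ∀ z : ℝ, ∫ y : ℝ, D2 F (s, y, z) = 0 := by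
    intro z
    have hg : ContDiff ℝ 1 (fun t : ℝ => F (s, t, z)) :=
      (hF.of_le (by simp)).comp
        (contDiff_const.prodMk (contDiff_id.prodMk contDiff_const))
    exact integral_deriv_zero hg (slice2_hcs hs s z)
  simp only [this, integral_zero]

/-- The transverse integral of `D3` of a smooth compactly supported function vanishes. -/
lemma integral_D3_zero (hF : ContDiff ℝ (⊤ : ℕ∞) F) (hs : HasCompactSupport F) (s : ℝ) :
    ∫ p : ℝ × ℝ, D3 F (s, p.1, p.2) = 0 := by
  have hint : Integrable (fun p : ℝ × ℝ => D3 F (s, p.1, p.2)) :=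
    slice23_integrable (contDiff_D3 hF).continuous
      (hcs_D3 (hF.differentiable (by simp)) hs) s
  rw [Measure.volume_eq_prod] at hint ⊢
  rw [integral_prod _ hint]
  have : ∀ y : ℝ, ∫ z : ℝ, D3 F (s, y, z) = 0 := by
    intro y
    have hg : ContDiff ℝ 1 (fun t : ℝ => F (s, y, t)) :=
      (hF.of_le (by simp)).comp
        (contDiff_const.prodMk (contDiff_const.prodMk contDiff_id))
    exact integral_deriv_zero hg (slice3_hcs hs s y)
  simp only [this, integral_zero]

/-- Differentiation under the transverse integral. -/
lemma hasDerivAt_param (hF : ContDiff ℝ (⊤ : ℕ∞) F) (hs : HasCompactSupport F) (s : ℝ) :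
    HasDerivAt (fun t => ∫ p : ℝ × ℝ, F (t, p.1, p.2))
      (∫ p : ℝ × ℝ, D1 F (s, p.1, p.2)) s := by
  obtain ⟨R, hR⟩ := hs.isCompact.isBounded.subset_closedBall 0
  obtain ⟨C, hC⟩ :=
    (contDiff_D1 hF).continuous.bounded_above_of_compact_support
      (hcs_D1 (hF.differentiable (by simp)) hs)
  have hzero : ∀ p : ℝ × ℝ, R < ‖p‖ → ∀ t : ℝ, F (t, p.1, p.2) = 0 := by
    intro p hp t
    apply image_eq_zero_of_notMem_tsupport
    intro hmem
    have h1 := hR hmem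
    simp only [Metric.mem_closedBall, dist_zero_right] at h1
    exact absurd (le_trans (norm_snd_le ((t, p.1, p.2) : ℝ × ℝ × ℝ)) h1)
      (not_le.2 hp)
  have key := hasDerivAt_integral_of_dominated_loc_of_deriv_le
    (F := fun t (p : ℝ × ℝ) => F (t, p.1, p.2))
    (F' := fun t (p : ℝ × ℝ) => D1 F (t, p.1, p.2))
    (x₀ := s) (s := Metric.ball s 1)
    (bound := (Metric.closedBall (0 : ℝ × ℝ) R).indicator (fun _ => C))
    (Metric.ball_mem_nhds s one_pos)
    (Filter.Eventually.of_forall fun t =>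
      (slice23_cont hF.continuous t).aestronglyMeasurable)
    (slice23_integrable hF.continuous hs s)
    ((slice23_cont (contDiff_D1 hF).continuous s).aestronglyMeasurable)
    ?_ ?_ ?_
  · exact key.2
  · refine Filter.Eventually.of_forall fun p => fun t _ => ?_
    by_cases hp : p ∈ Metric.closedBall (0 : ℝ × ℝ) R
    · rw [Set.indicator_of_mem hp]
      exact hC _
    · rw [Set.indicator_of_notMem hp]
      have hpR : R < ‖p‖ := by
        simpa [Metric.mem_closedBall, dist_zero_right, not_le] using hp
      have : D1 F (t, p.1, p.2) = 0 := by
        have hconst : (fun r : ℝ => F (r, p.1, p.2)) = fun _ => (0 : ℝ) :=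
          funext fun r => hzero p hpR r
        show deriv (fun r : ℝ => F (r, p.1, p.2)) t = 0
        rw [hconst, deriv_const]
      show ‖D1 F (t, p.1, p.2)‖ ≤ 0
      rw [this, norm_zero]
  · exact (integrable_indicator_iff measurableSet_closedBall).2
      (integrableOn_const measure_closedBall_lt_top.ne)
  · refine Filter.Eventually.of_forall fun p => fun t _ => ?_
    have hd : DifferentiableAt ℝ (fun r : ℝ => F (r, p.1, p.2)) t :=
      ((hF.differentiable (by simp)) (t, p.1, p.2)).comp t
        (differentiableAt_id.prodMk (differentiableAt_const (p.1, p.2)))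
    exact hd.hasDerivAt

end ChuAux

open ChuAux in
/-- Chu reduction of the Lenard–Bernstein collision term for the zeroth
transverse moment: `∫ ∇_v·((v−ū)f + θ∇_v f) dv_y dv_z = d/ds ((s−u)g₁ + θ g₁′)`. -/
theorem chu_reduction_collision_g1
    (f : ℝ × ℝ × ℝ → ℝ) (hf : ContDiff ℝ (⊤ : ℕ∞) f) (hsupp : HasCompactSupport f)
    (u θ : ℝ) (g₁ : ℝ → ℝ)
    (hg₁ : ∀ s : ℝ, g₁ s = ∫ p : ℝ × ℝ, f (s, p.1, p.2)) :
    ∀ s : ℝ,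
      (∫ p : ℝ × ℝ, lbDiv f u θ (s, p.1, p.2)) =
        deriv (fun t => (t - u) * g₁ t + θ * deriv g₁ t) s := by
  intro s
  have hdf : Differentiable ℝ f := hf.differentiable (by simp)
  set F1 : ℝ × ℝ × ℝ → ℝ := fun w => (w.1 - u) * f w + θ * D1 f w with hF1def
  set F2 : ℝ × ℝ × ℝ → ℝ := fun w => w.2.1 * f w + θ * D2 f w with hF2def
  set F3 : ℝ × ℝ × ℝ → ℝ := fun w => w.2.2 * f w + θ * D3 f w with hF3def
  have hF1 : ContDiff ℝ (⊤ : ℕ∞) F1 :=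
    ((contDiff_fst.sub contDiff_const).mul hf).add
      (contDiff_const.mul (contDiff_D1 hf))
  have hF2 : ContDiff ℝ (⊤ : ℕ∞) F2 :=
    ((contDiff_snd.fst.comp contDiff_id).mul hf).add
      (contDiff_const.mul (contDiff_D2 hf))
  have hF3 : ContDiff ℝ (⊤ : ℕ∞) F3 :=
    ((contDiff_snd.snd.comp contDiff_id).mul hf).add
      (contDiff_const.mul (contDiff_D3 hf))
  have hs1 : HasCompactSupport F1 :=
    (hsupp.mul_left).add ((hcs_D1 hdf hsupp).mul_left)
  have hs2 : HasCompactSupport F2 :=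
    (hsupp.mul_left).add ((hcs_D2 hdf hsupp).mul_left)
  have hs3 : HasCompactSupport F3 :=
    (hsupp.mul_left).add ((hcs_D3 hdf hsupp).mul_left)
  -- split the integral
  have hi1 : Integrable (fun p : ℝ × ℝ => D1 F1 (s, p.1, p.2)) :=
    slice23_integrable (contDiff_D1 hF1).continuous
      (hcs_D1 (hF1.differentiable (by simp)) hs1) s
  have hi2 : Integrable (fun p : ℝ × ℝ => D2 F2 (s, p.1, p.2)) :=
    slice23_integrable (contDiff_D2 hF2).continuous
      (hcs_D2 (hF2.differentiable (by simp)) hs2) s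
  have hi3 : Integrable (fun p : ℝ × ℝ => D3 F3 (s, p.1, p.2)) :=
    slice23_integrable (contDiff_D3 hF3).continuous
      (hcs_D3 (hF3.differentiable (by simp)) hs3) s
  have hsplit : (∫ p : ℝ × ℝ, lbDiv f u θ (s, p.1, p.2)) =
      (∫ p : ℝ × ℝ, D1 F1 (s, p.1, p.2)) + ((∫ p : ℝ × ℝ, D2 F2 (s, p.1, p.2))
        + (∫ p : ℝ × ℝ, D3 F3 (s, p.1, p.2))) := by
    have e23 : (∫ p : ℝ × ℝ, (D2 F2 (s, p.1, p.2) + D3 F3 (s, p.1, p.2))) =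
        (∫ p : ℝ × ℝ, D2 F2 (s, p.1, p.2)) + ∫ p : ℝ × ℝ, D3 F3 (s, p.1, p.2) :=
      integral_add hi2 hi3
    have e123 : (∫ p : ℝ × ℝ, (D1 F1 (s, p.1, p.2)
          + (D2 F2 (s, p.1, p.2) + D3 F3 (s, p.1, p.2)))) =
        (∫ p : ℝ × ℝ, D1 F1 (s, p.1, p.2))
          + ∫ p : ℝ × ℝ, (D2 F2 (s, p.1, p.2) + D3 F3 (s, p.1, p.2)) :=
      integral_add hi1 (hi2.add hi3)
    have hlb : (∫ p : ℝ × ℝ, lbDiv f u θ (s, p.1, p.2)) =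
        ∫ p : ℝ × ℝ, (D1 F1 (s, p.1, p.2)
          + (D2 F2 (s, p.1, p.2) + D3 F3 (s, p.1, p.2))) := by
      congr 1
      funext p
      show D1 F1 (s, p.1, p.2) + D2 F2 (s, p.1, p.2) + D3 F3 (s, p.1, p.2) = _
      ring
    rw [hlb, e123, e23]
  rw [hsplit, integral_D2_zero hF2 hs2 s, integral_D3_zero hF3 hs3 s]
  -- identify the parametric integral of F1
  have hderiv_g₁ : deriv g₁ = fun t => ∫ p : ℝ × ℝ, D1 f (t, p.1, p.2) := by
    funext t
    have hg₁eq : g₁ = fun t => ∫ p : ℝ × ℝ, f (t, p.1, p.2) := funext hg₁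
    rw [hg₁eq]
    exact (hasDerivAt_param hf hsupp t).deriv
  have hF1int : ∀ t : ℝ, (∫ p : ℝ × ℝ, F1 (t, p.1, p.2)) =
      (t - u) * g₁ t + θ * deriv g₁ t := by
    intro t
    have hif : Integrable (fun p : ℝ × ℝ => f (t, p.1, p.2)) :=
      slice23_integrable hf.continuous hsupp t
    have hid : Integrable (fun p : ℝ × ℝ => D1 f (t, p.1, p.2)) :=
      slice23_integrable (contDiff_D1 hf).continuous (hcs_D1 hdf hsupp) t
    have : (∫ p : ℝ × ℝ, F1 (t, p.1, p.2)) =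
        (∫ p : ℝ × ℝ, (t - u) * f (t, p.1, p.2))
          + ∫ p : ℝ × ℝ, θ * D1 f (t, p.1, p.2) :=
      integral_add (hif.const_mul (t - u)) (hid.const_mul θ)
    rw [this, integral_const_mul, integral_const_mul, hg₁ t, hderiv_g₁]
  have hfun : (fun t => (t - u) * g₁ t + θ * deriv g₁ t) =
      fun t => ∫ p : ℝ × ℝ, F1 (t, p.1, p.2) := funext fun t => (hF1int t).symm
  rw [hfun]
  rw [(hasDerivAt_param hF1 hs1 s).deriv]
  ring
end
end

section
/- Let f : ℝ³ → ℝ be smooth and compactly supported, let u ∈ ℝ and θ ∈ ℝ, and set ū := (u, 0, 0) ∈ ℝ³. Define g₂(s) := ∫_{ℝ²} (v_y² + v_z²) f(s, v_y, v_z) dv_y dv_z and g₃(s) := ∫_{ℝ²} (v_y⁴ + v_z⁴) f(s, v_y, v_z) dv_y dv_z. Then for every s ∈ ℝ, ∫_{ℝ²} (v_y⁴ + v_z⁴) [ ∇_v · ( (v − ū) f(v) + θ ∇_v f(v) ) ]_{v=(s,v_y,v_z)} dv_y dv_z = d/ds ( (s − u) g₃(s) + θ g₃′(s) ) + 12 θ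 g₂(s) − 4 g₃(s). -/
open MeasureTheory

noncomputable section

open Metric Set

local notation "V" => (ℝ × ℝ × ℝ)

lemma hasDerivAt1 {f : V → ℝ} (hf : ContDiff ℝ (⊤ : ℕ∞) f) (x y z : ℝ) :
    HasDerivAt (fun s => f (s, y, z)) (fderiv ℝ f (x, y, z) (1, 0, 0)) x := by
  have h1 : HasDerivAt (fun s : ℝ => ((s, y, z) : V)) ((1 : ℝ), (0 : ℝ), (0 : ℝ)) x :=
    (hasDerivAt_id x).prodMk ((hasDerivAt_const x y).prodMk (hasDerivAt_const x z))
  exact ((hf.differentiable (by simp) _).hasFDerivAt).comp_hasDerivAt x h1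

lemma hasDerivAt2 {f : V → ℝ} (hf : ContDiff ℝ (⊤ : ℕ∞) f) (x y z : ℝ) :
    HasDerivAt (fun s => f (x, s, z)) (fderiv ℝ f (x, y, z) (0, 1, 0)) y := by
  have h1 : HasDerivAt (fun s : ℝ => ((x, s, z) : V)) ((0 : ℝ), (1 : ℝ), (0 : ℝ)) y :=
    (hasDerivAt_const y x).prodMk ((hasDerivAt_id y).prodMk (hasDerivAt_const y z))
  exact ((hf.differentiable (by simp) _).hasFDerivAt).comp_hasDerivAt y h1

lemma hasDerivAt3 {f : V → ℝ} (hf : ContDiff ℝ (⊤ : ℕ∞) f) (x y z : ℝ) :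
    HasDerivAt (fun s => f (x, y, s)) (fderiv ℝ f (x, y, z) (0, 0, 1)) z := by
  have h1 : HasDerivAt (fun s : ℝ => ((x, y, s) : V)) ((0 : ℝ), (0 : ℝ), (1 : ℝ)) z :=
    (hasDerivAt_const z x).prodMk ((hasDerivAt_const z y).prodMk (hasDerivAt_id z))
  exact ((hf.differentiable (by simp) _).hasFDerivAt).comp_hasDerivAt z h1

lemma contDiff_dv {f : V → ℝ} (hf : ContDiff ℝ (⊤ : ℕ∞) f) (c : V) :
    ContDiff ℝ (⊤ : ℕ∞) (fun v => fderiv ℝ f v c) :=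
  (hf.fderiv_right (le_of_eq ENat.coe_top_add_one)).clm_apply contDiff_const

lemma hcs_dv {f : V → ℝ} (hs : HasCompactSupport f) (c : V) :
    HasCompactSupport (fun v => fderiv ℝ f v c) :=
  (hs.fderiv ℝ).comp_left (g := fun L : V →L[ℝ] ℝ => L c) rfl

lemma hcs_slice23 {f : V → ℝ} (hs : HasCompactSupport f) (s : ℝ) :
    HasCompactSupport (fun p : ℝ × ℝ => f (s, p.1, p.2)) := by
  obtain ⟨R, hR0, hR⟩ := hs.exists_pos_le_norm
  apply HasCompactSupport.intro (isCompact_closedBall (0 : ℝ × ℝ) R)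
  intro p hp
  apply hR
  calc R ≤ ‖p‖ := by
        simpa [dist_eq_norm] using (le_of_not_ge (fun h => hp (mem_closedBall_zero_iff.2 h)))
    _ = ‖(p.1, p.2)‖ := by rw [Prod.mk.eta]
    _ ≤ ‖((s, p.1, p.2) : V)‖ := norm_snd_le ((_,_,_) : V)

lemma hcs_slice2 {f : V → ℝ} (hs : HasCompactSupport f) (s z : ℝ) :
    HasCompactSupport (fun y : ℝ => f (s, y, z)) := by
  obtain ⟨R, hR0, hR⟩ := hs.exists_pos_le_norm
  apply HasCompactSupport.intro (isCompact_closedBall (0 : ℝ) R)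
  intro y hy
  apply hR
  calc R ≤ ‖y‖ := by
        simpa [dist_eq_norm] using (le_of_not_ge (fun h => hy (mem_closedBall_zero_iff.2 h)))
    _ ≤ ‖((y, z) : ℝ × ℝ)‖ := norm_fst_le ((y,z) : ℝ × ℝ)
    _ ≤ ‖((s, y, z) : V)‖ := norm_snd_le ((_,_,_) : V)

lemma hcs_slice3 {f : V → ℝ} (hs : HasCompactSupport f) (s y : ℝ) :
    HasCompactSupport (fun z : ℝ => f (s, y, z)) := by
  obtain ⟨R, hR0, hR⟩ := hs.exists_pos_le_norm
  apply HasCompactSupport.intro (isCompact_closedBall (0 : ℝ) R)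
  intro z hz
  apply hR
  calc R ≤ ‖z‖ := by
        simpa [dist_eq_norm] using (le_of_not_ge (fun h => hz (mem_closedBall_zero_iff.2 h)))
    _ ≤ ‖((y, z) : ℝ × ℝ)‖ := norm_snd_le ((y,z) : ℝ × ℝ)
    _ ≤ ‖((s, y, z) : V)‖ := norm_snd_le ((_,_,_) : V)

lemma cont_slice23 {f : V → ℝ} (hf : Continuous f) (s : ℝ) :
    Continuous (fun p : ℝ × ℝ => f (s, p.1, p.2)) := by fun_prop

lemma integrable_slice23 {f : V → ℝ} (hf : Continuous f) (hs : HasCompactSupport f)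
    {w : ℝ × ℝ → ℝ} (hw : Continuous w) (s : ℝ) :
    Integrable (fun p : ℝ × ℝ => w p * f (s, p.1, p.2)) := by
  apply Continuous.integrable_of_hasCompactSupport (by fun_prop)
  exact (hcs_slice23 hs s).mul_left

lemma integrable_slice2 {f : V → ℝ} (hf : Continuous f) (hs : HasCompactSupport f)
    {w : ℝ → ℝ} (hw : Continuous w) (s z : ℝ) :
    Integrable (fun y : ℝ => w y * f (s, y, z)) := by
  apply Continuous.integrable_of_hasCompactSupport (by fun_prop)
  exact (hcs_slice2 hs s z).mul_left

lemma integrable_slice3 {f : V → ℝ} (hf : Continuous f) (hs : HasCompactSupport f)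
    {w : ℝ → ℝ} (hw : Continuous w) (s y : ℝ) :
    Integrable (fun z : ℝ => w z * f (s, y, z)) := by
  apply Continuous.integrable_of_hasCompactSupport (by fun_prop)
  exact (hcs_slice3 hs s y).mul_left

lemma dui {F : V → ℝ} (hF : ContDiff ℝ (⊤ : ℕ∞) F) (hFs : HasCompactSupport F)
    {w : ℝ × ℝ → ℝ} (hw : Continuous w) (s : ℝ) :
    HasDerivAt (fun t => ∫ p : ℝ × ℝ, w p * F (t, p.1, p.2))
      (∫ p : ℝ × ℝ, w p * fderiv ℝ F (s, p.1, p.2) (1, 0, 0)) s := by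
  set G : V → ℝ := fun v => fderiv ℝ F v (1, 0, 0) with hG
  have hGc : Continuous G := (contDiff_dv hF _).continuous
  have hGs : HasCompactSupport G := hcs_dv hFs _
  obtain ⟨R, hR0, hR⟩ := hGs.exists_pos_le_norm
  obtain ⟨C, hC⟩ := hGs.exists_bound_of_continuous hGc
  obtain ⟨Cw, hCw⟩ := (isCompact_closedBall (0 : ℝ × ℝ) R).exists_bound_of_continuousOn
    hw.continuousOn
  have hC0 : 0 ≤ C := le_trans (norm_nonneg _) (hC 0)
  have hCw0 : 0 ≤ Cw := le_trans (norm_nonneg _)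
    (hCw 0 (mem_closedBall_self hR0.le))
  have key := hasDerivAt_integral_of_dominated_loc_of_deriv_le (μ := (volume : Measure (ℝ × ℝ)))
    (F := fun t (p : ℝ × ℝ) => w p * F (t, p.1, p.2))
    (F' := fun t (p : ℝ × ℝ) => w p * G (t, p.1, p.2))
    (bound := Set.indicator (closedBall (0 : ℝ × ℝ) R) (fun _ => Cw * C))
    (x₀ := s) (Metric.ball_mem_nhds s one_pos) ?_ ?_ ?_ ?_ ?_ ?_
  · exact key.2
  · filter_upwards with t
    exact ((hw.mul (hF.continuous.comp
      (continuous_const.prodMk (continuous_fst.prodMk continuous_snd)))).aestronglyMeasurable)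
  · exact integrable_slice23 hF.continuous hFs hw s
  · exact ((hw.mul (hGc.comp
      (continuous_const.prodMk (continuous_fst.prodMk continuous_snd)))).aestronglyMeasurable)
  · filter_upwards with p
    intro t ht
    by_cases hp : p ∈ closedBall (0 : ℝ × ℝ) R
    · rw [Set.indicator_of_mem hp]
      calc ‖w p * G (t, p.1, p.2)‖ = ‖w p‖ * ‖G (t, p.1, p.2)‖ := norm_mul _ _
        _ ≤ Cw * C := mul_le_mul (hCw p hp) (hC _) (norm_nonneg _) hCw0
    · rw [Set.indicator_of_notMem hp]
      have hpR : R ≤ ‖p‖ := le_of_not_ge (fun h => hp (mem_closedBall_zero_iff.2 h))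
      have : G (t, p.1, p.2) = 0 := by
        apply hR
        calc R ≤ ‖p‖ := hpR
          _ = ‖(p.1, p.2)‖ := by rw [Prod.mk.eta]
          _ ≤ ‖((t, p.1, p.2) : V)‖ := norm_snd_le ((_,_,_) : V)
      simp [this]
  · exact (integrableOn_const measure_closedBall_lt_top.ne).integrable_indicator
      measurableSet_closedBall
  · filter_upwards with p
    intro t ht
    exact (hasDerivAt1 hF t p.1 p.2).const_mul (w p)

lemma integrable_w_mul {φ w : ℝ → ℝ} (hφ : Continuous φ) (hcs : HasCompactSupport φ)
    (hw : Continuous w) : Integrable (fun y => w y * φ y) :=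
  Continuous.integrable_of_hasCompactSupport (hw.mul hφ) hcs.mul_left

lemma ibp {q ψ : ℝ → ℝ} (hq : ContDiff ℝ (⊤ : ℕ∞) q) (hψ : ContDiff ℝ (⊤ : ℕ∞) ψ)
    (hψs : HasCompactSupport ψ) :
    ∫ y : ℝ, q y * deriv ψ y = - ∫ y : ℝ, deriv q y * ψ y := by
  have hψd : ContDiff ℝ (⊤ : ℕ∞) (deriv ψ) := (contDiff_infty_iff_deriv.mp hψ).2
  have hqd : ContDiff ℝ (⊤ : ℕ∞) (deriv q) := (contDiff_infty_iff_deriv.mp hq).2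
  exact integral_mul_deriv_eq_deriv_mul_of_integrable
    (fun x _ => (hq.differentiable (by simp) x).hasDerivAt)
    (fun x _ => (hψ.differentiable (by simp) x).hasDerivAt)
    (integrable_w_mul hψd.continuous hψs.deriv hq.continuous)
    (integrable_w_mul hψ.continuous hψs hqd.continuous)
    (integrable_w_mul hψ.continuous hψs hq.continuous)

lemma inner1d {φ : ℝ → ℝ} (hφ : ContDiff ℝ (⊤ : ℕ∞) φ) (hcs : HasCompactSupport φ) (θ c : ℝ) :
    ∫ y : ℝ, (y ^ 4 + c) * deriv (fun y' => y' * φ y' + θ * deriv φ y') y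
      = ∫ y : ℝ, (12 * θ * y ^ 2 - 4 * y ^ 4) * φ y := by
  have hφd : ContDiff ℝ (⊤ : ℕ∞) (deriv φ) := (contDiff_infty_iff_deriv.mp hφ).2
  set ψ : ℝ → ℝ := fun y' => y' * φ y' + θ * deriv φ y' with hψdef
  have hψ : ContDiff ℝ (⊤ : ℕ∞) ψ := (contDiff_id.mul hφ).add (contDiff_const.mul hφd)
  have hψs : HasCompactSupport ψ := by
    apply HasCompactSupport.add
    · exact hcs.mul_left
    · exact hcs.deriv.mul_left
  have hq : ContDiff ℝ (⊤ : ℕ∞) (fun y : ℝ => y ^ 4 + c) :=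
    (contDiff_id.pow 4).add contDiff_const
  have hq' : deriv (fun y : ℝ => y ^ 4 + c) = fun y => 4 * y ^ 3 := by
    funext y
    have := ((hasDerivAt_pow 4 y).add_const c).deriv
    simpa using this
  have hq2 : ContDiff ℝ (⊤ : ℕ∞) (fun y : ℝ => 4 * y ^ 3) :=
    contDiff_const.mul (contDiff_id.pow 3)
  have hq2' : deriv (fun y : ℝ => 4 * y ^ 3) = fun y => 12 * y ^ 2 := by
    funext y
    have := ((hasDerivAt_pow 3 y).const_mul (4 : ℝ)).deriv
    rw [this]; ring
  rw [ibp hq hψ hψs, hq']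
  -- now : - ∫ y, 4 * y^3 * ψ y = ∫ y, (12θy² - 4y⁴) φ y
  have split : (fun y : ℝ => 4 * y ^ 3 * ψ y)
      = fun y => 4 * (y ^ 4 * φ y) + θ * (4 * y ^ 3 * deriv φ y) := by
    funext y; simp only [hψdef]; ring
  have i1 : Integrable (fun y : ℝ => 4 * (y ^ 4 * φ y)) := by
    simpa [mul_assoc] using integrable_w_mul hφ.continuous hcs
      (by fun_prop : Continuous fun y : ℝ => 4 * y ^ 4)
  have i2 : Integrable (fun y : ℝ => 4 * y ^ 3 * deriv φ y) :=
    integrable_w_mul hφd.continuous hcs.deriv (by fun_prop)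
  rw [split, integral_add i1 (i2.const_mul θ), integral_const_mul, integral_const_mul]
  have ibp2 : ∫ y : ℝ, 4 * y ^ 3 * deriv φ y = - ∫ y : ℝ, 12 * y ^ 2 * φ y := by
    rw [ibp hq2 hφ hcs, hq2']
  rw [ibp2]
  have expand : (fun y : ℝ => (12 * θ * y ^ 2 - 4 * y ^ 4) * φ y)
      = fun y => θ * (12 * y ^ 2 * φ y) - 4 * (y ^ 4 * φ y) := by
    funext y; ring
  have i3 : Integrable (fun y : ℝ => 12 * y ^ 2 * φ y) :=
    integrable_w_mul hφ.continuous hcs (by fun_prop)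
  rw [expand, integral_sub (i3.const_mul θ) i1, integral_const_mul, integral_const_mul]
  ring

lemma termB {f : V → ℝ} (hf : ContDiff ℝ (⊤ : ℕ∞) f) (hs : HasCompactSupport f) (θ s : ℝ) :
    ∫ p : ℝ × ℝ, (p.1 ^ 4 + p.2 ^ 4) * D2 (fun w => w.2.1 * f w + θ * D2 f w) (s, p.1, p.2)
      = ∫ p : ℝ × ℝ, (12 * θ * p.1 ^ 2 - 4 * p.1 ^ 4) * f (s, p.1, p.2) := by
  set H : V → ℝ := fun w => w.2.1 * f w + θ * D2 f w with hHdef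
  have hD2f : D2 f = fun v => fderiv ℝ f v (0, 1, 0) :=
    funext fun v => (hasDerivAt2 hf v.1 v.2.1 v.2.2).deriv
  have hH : ContDiff ℝ (⊤ : ℕ∞) H := by
    rw [hHdef, hD2f]
    exact ((contDiff_fst.comp contDiff_snd).mul hf).add (contDiff_const.mul (contDiff_dv hf _))
  have hHs : HasCompactSupport H := by
    rw [hHdef, hD2f]
    exact hs.mul_left.add ((hcs_dv hs _).mul_left)
  have hD2H : D2 H = fun v => fderiv ℝ H v (0, 1, 0) :=
    funext fun v => (hasDerivAt2 hH v.1 v.2.1 v.2.2).deriv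
  have hint : Integrable (fun p : ℝ × ℝ => (p.1 ^ 4 + p.2 ^ 4) * D2 H (s, p.1, p.2))
      (volume.prod volume) := by
    rw [hD2H, ← Measure.volume_eq_prod]
    exact integrable_slice23 (contDiff_dv hH _).continuous (hcs_dv hHs _) (by fun_prop) s
  have hint2 : Integrable (fun p : ℝ × ℝ => (12 * θ * p.1 ^ 2 - 4 * p.1 ^ 4) * f (s, p.1, p.2))
      (volume.prod volume) := by
    rw [← Measure.volume_eq_prod]
    exact integrable_slice23 hf.continuous hs (by fun_prop) s
  have hinner : ∀ z : ℝ, (∫ y : ℝ, (y ^ 4 + z ^ 4) * D2 H (s, y, z))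
      = ∫ y : ℝ, (12 * θ * y ^ 2 - 4 * y ^ 4) * f (s, y, z) := by
    intro z
    have hφ : ContDiff ℝ (⊤ : ℕ∞) (fun y => f (s, y, z)) :=
      hf.comp (contDiff_const.prodMk (contDiff_id.prodMk contDiff_const))
    exact inner1d hφ (hcs_slice2 hs s z) θ (z ^ 4)
  rw [Measure.volume_eq_prod, integral_prod_symm _ hint, integral_prod_symm _ hint2]
  simp only [hinner]

lemma termC {f : V → ℝ} (hf : ContDiff ℝ (⊤ : ℕ∞) f) (hs : HasCompactSupport f) (θ s : ℝ) :
    ∫ p : ℝ × ℝ, (p.1 ^ 4 + p.2 ^ 4) * D3 (fun w => w.2.2 * f w + θ * D3 f w) (s, p.1, p.2)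
      = ∫ p : ℝ × ℝ, (12 * θ * p.2 ^ 2 - 4 * p.2 ^ 4) * f (s, p.1, p.2) := by
  set K : V → ℝ := fun w => w.2.2 * f w + θ * D3 f w with hKdef
  have hD3f : D3 f = fun v => fderiv ℝ f v (0, 0, 1) :=
    funext fun v => (hasDerivAt3 hf v.1 v.2.1 v.2.2).deriv
  have hK : ContDiff ℝ (⊤ : ℕ∞) K := by
    rw [hKdef, hD3f]
    exact ((contDiff_snd.comp contDiff_snd).mul hf).add (contDiff_const.mul (contDiff_dv hf _))
  have hKs : HasCompactSupport K := by
    rw [hKdef, hD3f]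
    exact hs.mul_left.add ((hcs_dv hs _).mul_left)
  have hD3K : D3 K = fun v => fderiv ℝ K v (0, 0, 1) :=
    funext fun v => (hasDerivAt3 hK v.1 v.2.1 v.2.2).deriv
  have hint : Integrable (fun p : ℝ × ℝ => (p.1 ^ 4 + p.2 ^ 4) * D3 K (s, p.1, p.2))
      (volume.prod volume) := by
    rw [hD3K, ← Measure.volume_eq_prod]
    exact integrable_slice23 (contDiff_dv hK _).continuous (hcs_dv hKs _) (by fun_prop) s
  have hint2 : Integrable (fun p : ℝ × ℝ => (12 * θ * p.2 ^ 2 - 4 * p.2 ^ 4) * f (s, p.1, p.2))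
      (volume.prod volume) := by
    rw [← Measure.volume_eq_prod]
    exact integrable_slice23 hf.continuous hs (by fun_prop) s
  have hinner : ∀ y : ℝ, (∫ z : ℝ, (y ^ 4 + z ^ 4) * D3 K (s, y, z))
      = ∫ z : ℝ, (12 * θ * z ^ 2 - 4 * z ^ 4) * f (s, y, z) := by
    intro y
    have hφ : ContDiff ℝ (⊤ : ℕ∞) (fun z => f (s, y, z)) :=
      hf.comp (contDiff_const.prodMk (contDiff_const.prodMk contDiff_id))
    have h0 : (fun z : ℝ => (y ^ 4 + z ^ 4) * D3 K (s, y, z))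
        = fun z : ℝ => (z ^ 4 + y ^ 4) * D3 K (s, y, z) :=
      funext fun z => by rw [add_comm (y ^ 4) (z ^ 4)]
    rw [h0]
    exact inner1d hφ (hcs_slice3 hs s y) θ (y ^ 4)
  rw [Measure.volume_eq_prod, integral_prod _ hint, integral_prod _ hint2]
  simp only [hinner]

lemma termA {f : V → ℝ} (hf : ContDiff ℝ (⊤ : ℕ∞) f) (hs : HasCompactSupport f)
    (u θ : ℝ) (g₃ : ℝ → ℝ)
    (hg₃ : ∀ t : ℝ, g₃ t = ∫ p : ℝ × ℝ, (p.1 ^ 4 + p.2 ^ 4) * f (t, p.1, p.2)) (s : ℝ) :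
    ∫ p : ℝ × ℝ, (p.1 ^ 4 + p.2 ^ 4) * D1 (fun w => (w.1 - u) * f w + θ * D1 f w) (s, p.1, p.2)
      = deriv (fun t => (t - u) * g₃ t + θ * deriv g₃ t) s := by
  have hP : Continuous (fun p : ℝ × ℝ => p.1 ^ 4 + p.2 ^ 4) := by fun_prop
  set f₁ : V → ℝ := fun v => fderiv ℝ f v (1, 0, 0) with hf₁def
  have hD1f : D1 f = f₁ := funext fun v => (hasDerivAt1 hf v.1 v.2.1 v.2.2).deriv
  have hf₁ : ContDiff ℝ (⊤ : ℕ∞) f₁ := contDiff_dv hf _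
  have hf₁s : HasCompactSupport f₁ := hcs_dv hs _
  set G : V → ℝ := fun w => (w.1 - u) * f w + θ * D1 f w with hGdef
  have hGeq : G = fun w => (w.1 - u) * f w + θ * f₁ w := by rw [hGdef, hD1f]
  have hG : ContDiff ℝ (⊤ : ℕ∞) G := by
    rw [hGeq]
    exact ((contDiff_fst.sub contDiff_const).mul hf).add (contDiff_const.mul hf₁)
  have hGs : HasCompactSupport G := by
    rw [hGeq]
    exact hs.mul_left.add (hf₁s.mul_left)
  have hD1G : D1 G = fun v => fderiv ℝ G v (1, 0, 0) :=
    funext fun v => (hasDerivAt1 hG v.1 v.2.1 v.2.2).deriv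
  -- derivative of g₃
  have hg₃fun : g₃ = fun t => ∫ p : ℝ × ℝ, (p.1 ^ 4 + p.2 ^ 4) * f (t, p.1, p.2) := funext hg₃
  have hg₃deriv : ∀ t : ℝ, deriv g₃ t = ∫ p : ℝ × ℝ, (p.1 ^ 4 + p.2 ^ 4) * f₁ (t, p.1, p.2) := by
    intro t
    rw [hg₃fun]
    exact (dui hf hs hP t).deriv
  -- the function whose derivative we take
  have key : (fun t => (t - u) * g₃ t + θ * deriv g₃ t)
      = fun t => ∫ p : ℝ × ℝ, (p.1 ^ 4 + p.2 ^ 4) * G (t, p.1, p.2) := by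
    funext t
    rw [hg₃ t, hg₃deriv t, hGeq, ← integral_const_mul (t - u), ← integral_const_mul θ,
      ← integral_add]
    · congr 1
      funext p
      ring
    · exact (integrable_slice23 hf.continuous hs hP t).const_mul _
    · exact (integrable_slice23 hf₁.continuous hf₁s hP t).const_mul _
  rw [key, hD1G, (dui hG hGs hP s).deriv]

/-- Chu reduction of the Lenard–Bernstein collision term for the fourth
transverse moment: `∫ (v_y⁴+v_z⁴) ∇_v·((v−ū)f + θ∇_v f) dv_y dv_z
= d/ds ((s−u)g₃ + θ g₃′) + 12θ g₂ − 4 g₃`. -/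
theorem chu_reduction_collision_g3
    (f : ℝ × ℝ × ℝ → ℝ) (hf : ContDiff ℝ (⊤ : ℕ∞) f) (hsupp : HasCompactSupport f)
    (u θ : ℝ) (g₂ g₃ : ℝ → ℝ)
    (hg₂ : ∀ s : ℝ, g₂ s = ∫ p : ℝ × ℝ, (p.1 ^ 2 + p.2 ^ 2) * f (s, p.1, p.2))
    (hg₃ : ∀ s : ℝ, g₃ s = ∫ p : ℝ × ℝ, (p.1 ^ 4 + p.2 ^ 4) * f (s, p.1, p.2)) :
    ∀ s : ℝ,
      (∫ p : ℝ × ℝ, (p.1 ^ 4 + p.2 ^ 4) * lbDiv f u θ (s, p.1, p.2)) =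
        deriv (fun t => (t - u) * g₃ t + θ * deriv g₃ t) s
          + 12 * θ * g₂ s - 4 * g₃ s := by
  intro s
  have hf' : ContDiff ℝ (⊤ : ℕ∞) f := hf.of_le (by simp)
  have hP : Continuous (fun p : ℝ × ℝ => p.1 ^ 4 + p.2 ^ 4) := by fun_prop
  have hD1f : D1 f = fun v => fderiv ℝ f v (1, 0, 0) :=
    funext fun v => (hasDerivAt1 hf' v.1 v.2.1 v.2.2).deriv
  have hD2f : D2 f = fun v => fderiv ℝ f v (0, 1, 0) :=
    funext fun v => (hasDerivAt2 hf' v.1 v.2.1 v.2.2).deriv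
  have hD3f : D3 f = fun v => fderiv ℝ f v (0, 0, 1) :=
    funext fun v => (hasDerivAt3 hf' v.1 v.2.1 v.2.2).deriv
  -- smoothness and support of the three flux components
  have hG : ContDiff ℝ (⊤ : ℕ∞) (fun w : V => (w.1 - u) * f w + θ * D1 f w) := by
    rw [hD1f]
    exact ((contDiff_fst.sub contDiff_const).mul hf').add (contDiff_const.mul (contDiff_dv hf' _))
  have hGs : HasCompactSupport (fun w : V => (w.1 - u) * f w + θ * D1 f w) := by
    rw [hD1f]
    exact hsupp.mul_left.add ((hcs_dv hsupp _).mul_left)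
  have hH : ContDiff ℝ (⊤ : ℕ∞) (fun w : V => w.2.1 * f w + θ * D2 f w) := by
    rw [hD2f]
    exact ((contDiff_fst.comp contDiff_snd).mul hf').add
      (contDiff_const.mul (contDiff_dv hf' _))
  have hHs : HasCompactSupport (fun w : V => w.2.1 * f w + θ * D2 f w) := by
    rw [hD2f]
    exact hsupp.mul_left.add ((hcs_dv hsupp _).mul_left)
  have hK : ContDiff ℝ (⊤ : ℕ∞) (fun w : V => w.2.2 * f w + θ * D3 f w) := by
    rw [hD3f]
    exact ((contDiff_snd.comp contDiff_snd).mul hf').add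
      (contDiff_const.mul (contDiff_dv hf' _))
  have hKs : HasCompactSupport (fun w : V => w.2.2 * f w + θ * D3 f w) := by
    rw [hD3f]
    exact hsupp.mul_left.add ((hcs_dv hsupp _).mul_left)
  -- integrability of the three pieces
  have iA : Integrable (fun p : ℝ × ℝ =>
      (p.1 ^ 4 + p.2 ^ 4) * D1 (fun w => (w.1 - u) * f w + θ * D1 f w) (s, p.1, p.2)) := by
    rw [show D1 (fun w : V => (w.1 - u) * f w + θ * D1 f w)
        = fun v => fderiv ℝ (fun w : V => (w.1 - u) * f w + θ * D1 f w) v (1, 0, 0) from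
      funext fun v => (hasDerivAt1 hG v.1 v.2.1 v.2.2).deriv]
    exact integrable_slice23 (contDiff_dv hG _).continuous (hcs_dv hGs _) hP s
  have iB : Integrable (fun p : ℝ × ℝ =>
      (p.1 ^ 4 + p.2 ^ 4) * D2 (fun w => w.2.1 * f w + θ * D2 f w) (s, p.1, p.2)) := by
    rw [show D2 (fun w : V => w.2.1 * f w + θ * D2 f w)
        = fun v => fderiv ℝ (fun w : V => w.2.1 * f w + θ * D2 f w) v (0, 1, 0) from
      funext fun v => (hasDerivAt2 hH v.1 v.2.1 v.2.2).deriv]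
    exact integrable_slice23 (contDiff_dv hH _).continuous (hcs_dv hHs _) hP s
  have iC : Integrable (fun p : ℝ × ℝ =>
      (p.1 ^ 4 + p.2 ^ 4) * D3 (fun w => w.2.2 * f w + θ * D3 f w) (s, p.1, p.2)) := by
    rw [show D3 (fun w : V => w.2.2 * f w + θ * D3 f w)
        = fun v => fderiv ℝ (fun w : V => w.2.2 * f w + θ * D3 f w) v (0, 0, 1) from
      funext fun v => (hasDerivAt3 hK v.1 v.2.1 v.2.2).deriv]
    exact integrable_slice23 (contDiff_dv hK _).continuous (hcs_dv hKs _) hP s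
  have split : (fun p : ℝ × ℝ => (p.1 ^ 4 + p.2 ^ 4) * lbDiv f u θ (s, p.1, p.2))
      = fun p : ℝ × ℝ =>
        (p.1 ^ 4 + p.2 ^ 4) * D1 (fun w => (w.1 - u) * f w + θ * D1 f w) (s, p.1, p.2)
          + ((p.1 ^ 4 + p.2 ^ 4) * D2 (fun w => w.2.1 * f w + θ * D2 f w) (s, p.1, p.2)
          + (p.1 ^ 4 + p.2 ^ 4) * D3 (fun w => w.2.2 * f w + θ * D3 f w) (s, p.1, p.2)) := by
    funext p
    simp only [lbDiv]
    ring
  have iBC : Integrable (fun p : ℝ × ℝ =>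
      (p.1 ^ 4 + p.2 ^ 4) * D2 (fun w => w.2.1 * f w + θ * D2 f w) (s, p.1, p.2)
        + (p.1 ^ 4 + p.2 ^ 4) * D3 (fun w => w.2.2 * f w + θ * D3 f w) (s, p.1, p.2)) :=
    iB.add iC
  rw [split, integral_add iA iBC, integral_add iB iC,
    termA hf' hsupp u θ g₃ hg₃ s, termB hf' hsupp θ s, termC hf' hsupp θ s]
  have iB' : Integrable (fun p : ℝ × ℝ => (12 * θ * p.1 ^ 2 - 4 * p.1 ^ 4) * f (s, p.1, p.2)) :=
    integrable_slice23 hf'.continuous hsupp (by fun_prop) s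
  have iC' : Integrable (fun p : ℝ × ℝ => (12 * θ * p.2 ^ 2 - 4 * p.2 ^ 4) * f (s, p.1, p.2)) :=
    integrable_slice23 hf'.continuous hsupp (by fun_prop) s
  have comb : ((∫ p : ℝ × ℝ, (12 * θ * p.1 ^ 2 - 4 * p.1 ^ 4) * f (s, p.1, p.2))
      + ∫ p : ℝ × ℝ, (12 * θ * p.2 ^ 2 - 4 * p.2 ^ 4) * f (s, p.1, p.2))
      = 12 * θ * g₂ s - 4 * g₃ s := by
    rw [← integral_add iB' iC', hg₂ s, hg₃ s, ← integral_const_mul (12 * θ),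
      ← integral_const_mul 4, ← integral_sub
        ((integrable_slice23 hf'.continuous hsupp (by fun_prop) s).const_mul _)
        ((integrable_slice23 hf'.continuous hsupp (by fun_prop) s).const_mul _)]
    congr 1
    funext p
    ring
  rw [comb]
  ring
end
end

section
/- Let g̃₁, g̃₂ : ℝ → ℝ be smooth and compactly supported with n := ∫_ℝ g̃₁(v) dv > 0. Define u := (1/n) ∫_ℝ v g̃₁(v) dv and θ := (1/(3n)) ∫_ℝ [ g̃₁(v) (v − u)² + g̃₂(v) ] dv. Then (1/2) ∫_ℝ [ v² ∂_v( (v − u) g̃₁(v) + θ g̃₁′(v) ) + ∂_v( (v − u) g̃₂(v) + θ g̃₂′(v) ) + 4 θ g̃₁(v) − 2 g̃₂(v) ] dv = 0. -/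
open MeasureTheory

noncomputable section

open scoped ContDiff

private lemma integral_deriv_cs (f : ℝ → ℝ) (hf : ContDiff ℝ 1 f) (hs : HasCompactSupport f) :
    ∫ v : ℝ, deriv f v = 0 := by
  have hint : Integrable (deriv f) :=
    (hf.continuous_deriv le_rfl).integrable_of_hasCompactSupport hs.deriv
  rw [← intervalIntegral.integral_Iic_add_Ioi (b := (0:ℝ)) hint.integrableOn hint.integrableOn,
    hs.integral_Iic_deriv_eq hf, hs.integral_Ioi_deriv_eq hf]
  ring


/-- Conservation of total energy by the reduced collision system of the
Chu reduction: with fluid variables `n = ∫ g̃₁`, `u = (1/n) ∫ v g̃₁`,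
`θ = (1/(3n)) ∫ [g̃₁ (v−u)² + g̃₂]`, one has
`(1/2) ∫ [v² C₁(g̃₁;u,θ) + C₁(g̃₂;u,θ) + 4θ g̃₁ − 2 g̃₂] dv = 0`. -/
theorem reduced_lenardBernstein_energy_conservation
    (g₁ g₂ : ℝ → ℝ)
    (hg₁ : ContDiff ℝ (⊤ : ℕ∞) g₁) (hs₁ : HasCompactSupport g₁)
    (hg₂ : ContDiff ℝ (⊤ : ℕ∞) g₂) (hs₂ : HasCompactSupport g₂)
    (n u θ : ℝ)
    (hn_def : n = ∫ v : ℝ, g₁ v) (hn_pos : 0 < n)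
    (hu_def : u = (1 / n) * ∫ v : ℝ, v * g₁ v)
    (hθ_def : θ = (1 / (3 * n)) * ∫ v : ℝ, (g₁ v * (v - u) ^ 2 + g₂ v)) :
    (1 / 2) * (∫ v : ℝ,
        (v ^ 2 * deriv (fun v' => (v' - u) * g₁ v' + θ * deriv g₁ v') v
          + deriv (fun v' => (v' - u) * g₂ v' + θ * deriv g₂ v') v
          + 4 * θ * g₁ v - 2 * g₂ v)) = 0 := by
  have hn : n ≠ 0 := ne_of_gt hn_pos
  have h1i : (1 : WithTop ℕ∞) ≤ ∞ := by exact_mod_cast le_top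
  replace hg₁ : ContDiff ℝ ∞ g₁ := hg₁.of_le (by simp)
  replace hg₂ : ContDiff ℝ ∞ g₂ := hg₂.of_le (by simp)
  -- smoothness of derivatives
  have hdg₁ : ContDiff ℝ ∞ (deriv g₁) := (contDiff_infty_iff_deriv.mp hg₁).2
  have hdg₂ : ContDiff ℝ ∞ (deriv g₂) := (contDiff_infty_iff_deriv.mp hg₂).2
  set A : ℝ → ℝ := fun v' => (v' - u) * g₁ v' + θ * deriv g₁ v' with hA_def
  set B : ℝ → ℝ := fun v' => (v' - u) * g₂ v' + θ * deriv g₂ v' with hB_def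
  have hA : ContDiff ℝ ∞ A :=
    ((contDiff_id.sub contDiff_const).mul hg₁).add (contDiff_const.mul hdg₁)
  have hB : ContDiff ℝ ∞ B :=
    ((contDiff_id.sub contDiff_const).mul hg₂).add (contDiff_const.mul hdg₂)
  have hsA : HasCompactSupport A := by
    apply HasCompactSupport.add
    · exact hs₁.mul_left
    · exact hs₁.deriv.mul_left
  have hsB : HasCompactSupport B := by
    apply HasCompactSupport.add
    · exact hs₂.mul_left
    · exact hs₂.deriv.mul_left
  -- the combined function F
  set F : ℝ → ℝ := fun v => v ^ 2 * A v - 2 * θ * (v * g₁ v) + B v with hF_def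
  have hF : ContDiff ℝ ∞ F :=
    (((contDiff_id.pow 2).mul hA).sub
      (contDiff_const.mul (contDiff_id.mul hg₁))).add hB
  have hsF : HasCompactSupport F := by
    have h1 : HasCompactSupport (fun v : ℝ => v ^ 2 * A v) := hsA.mul_left
    have h2 : HasCompactSupport (fun v : ℝ => 2 * θ * (v * g₁ v)) :=
      (hs₁.mul_left (f := fun v : ℝ => v)).mul_left
    have h3 : HasCompactSupport (fun v : ℝ => v ^ 2 * A v - 2 * θ * (v * g₁ v)) := by
      have := h1.add (h2.comp_left (g := Neg.neg) neg_zero)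
      simpa [sub_eq_add_neg, Pi.add_def, Function.comp_def] using this
    exact h3.add hsB
  -- pointwise identity: integrand = deriv F + G
  have hderivF : ∀ v : ℝ, deriv F v =
      v ^ 2 * deriv A v + 2 * v * A v - 2 * θ * (g₁ v + v * deriv g₁ v) + deriv B v := by
    intro v
    have h1 : HasDerivAt (fun w : ℝ => w ^ 2) (2 * v) v := by
      simpa using (hasDerivAt_pow 2 v)
    have hAv : HasDerivAt A (deriv A v) v := (hA.differentiable (by simp) v).hasDerivAt
    have hBv : HasDerivAt B (deriv B v) v := (hB.differentiable (by simp) v).hasDerivAt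
    have hg₁v : HasDerivAt g₁ (deriv g₁ v) v := (hg₁.differentiable (by simp) v).hasDerivAt
    have h2 : HasDerivAt (fun w : ℝ => w * g₁ w) (g₁ v + v * deriv g₁ v) v := by
      simpa [Pi.mul_def] using (hasDerivAt_id' v).mul hg₁v
    have : HasDerivAt F
        (v ^ 2 * deriv A v + 2 * v * A v - 2 * θ * (g₁ v + v * deriv g₁ v) + deriv B v) v := by
      have := (((h1.mul hAv).sub ((h2.const_mul (2 * θ)))).add hBv)
      convert this using 1
      · rfl
      · rfl
      · rfl
      · ring
    exact this.deriv
  -- integrability facts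
  have int_of_cs : ∀ (f : ℝ → ℝ), Continuous f → HasCompactSupport f → Integrable f :=
    fun f hc hcs => hc.integrable_of_hasCompactSupport hcs
  have hig₁ : Integrable g₁ := int_of_cs g₁ hg₁.continuous hs₁
  have hig₂ : Integrable g₂ := int_of_cs g₂ hg₂.continuous hs₂
  have hivg₁ : Integrable (fun v : ℝ => v * g₁ v) :=
    int_of_cs _ (continuous_id.mul hg₁.continuous) hs₁.mul_left
  have hiv2g₁ : Integrable (fun v : ℝ => v ^ 2 * g₁ v) :=
    int_of_cs _ ((continuous_id.pow 2).mul hg₁.continuous) hs₁.mul_left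
  have hiF' : Integrable (deriv F) :=
    int_of_cs _ (hF.continuous_deriv h1i) hsF.deriv
  -- moments
  set I0 : ℝ := ∫ v : ℝ, g₁ v with hI0
  set I1 : ℝ := ∫ v : ℝ, v * g₁ v with hI1
  set I2 : ℝ := ∫ v : ℝ, v ^ 2 * g₁ v with hI2
  set J : ℝ := ∫ v : ℝ, g₂ v with hJ
  have hI1u : I1 = u * n := by
    rw [hu_def]; field_simp
  -- θ relation
  have hθ3n : 3 * n * θ = I2 - 2 * u * I1 + u ^ 2 * I0 + J := by
    have hexp : ∀ v : ℝ, g₁ v * (v - u) ^ 2 + g₂ v =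
        v ^ 2 * g₁ v - (2 * u) * (v * g₁ v) + u ^ 2 * g₁ v + g₂ v := by
      intro v; ring
    have : (∫ v : ℝ, (g₁ v * (v - u) ^ 2 + g₂ v)) =
        I2 - 2 * u * I1 + u ^ 2 * I0 + J := by
      rw [hI2, hI1, hI0, hJ]
      rw [show (fun v : ℝ => g₁ v * (v - u) ^ 2 + g₂ v) =
        (fun v : ℝ => v ^ 2 * g₁ v - (2 * u) * (v * g₁ v) + u ^ 2 * g₁ v + g₂ v) from
        funext hexp]
      have ib : Integrable (fun v : ℝ => 2 * u * (v * g₁ v)) := hivg₁.const_mul _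
      have ic : Integrable (fun v : ℝ => u ^ 2 * g₁ v) := hig₁.const_mul _
      have ia : Integrable (fun v : ℝ => v ^ 2 * g₁ v - 2 * u * (v * g₁ v)) := by
        exact hiv2g₁.sub ib
      have iad : Integrable (fun v : ℝ => v ^ 2 * g₁ v - 2 * u * (v * g₁ v) + u ^ 2 * g₁ v) := by
        exact ia.add ic
      rw [integral_add iad hig₂, integral_add ia ic, integral_sub hiv2g₁ ib,
        integral_const_mul, integral_const_mul]
    rw [hθ_def, this]
    field_simp
  -- rewrite the integrand
  have hintegrand : ∀ v : ℝ,
      v ^ 2 * deriv A v + deriv B v + 4 * θ * g₁ v - 2 * g₂ v =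
      deriv F v + (-2 * (v ^ 2 * g₁ v) + (2 * u) * (v * g₁ v) + 6 * θ * g₁ v - 2 * g₂ v) := by
    intro v
    rw [hderivF v]
    simp only [hA_def]
    ring
  rw [show (fun v : ℝ =>
        v ^ 2 * deriv (fun v' => (v' - u) * g₁ v' + θ * deriv g₁ v') v
          + deriv (fun v' => (v' - u) * g₂ v' + θ * deriv g₂ v') v
          + 4 * θ * g₁ v - 2 * g₂ v) =
      (fun v : ℝ => deriv F v + (-2 * (v ^ 2 * g₁ v) + (2 * u) * (v * g₁ v)
          + 6 * θ * g₁ v - 2 * g₂ v)) from funext hintegrand]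
  have hiG : Integrable (fun v : ℝ => -2 * (v ^ 2 * g₁ v) + (2 * u) * (v * g₁ v)
      + 6 * θ * g₁ v - 2 * g₂ v) :=
    by exact (((hiv2g₁.const_mul (-2)).add (hivg₁.const_mul (2*u))).add
      (hig₁.const_mul (6*θ))).sub (hig₂.const_mul 2)
  rw [integral_add hiF' hiG, integral_deriv_cs F (hF.of_le h1i) hsF]
  have hGval : (∫ v : ℝ, (-2 * (v ^ 2 * g₁ v) + (2 * u) * (v * g₁ v)
      + 6 * θ * g₁ v - 2 * g₂ v)) =
      -2 * I2 + (2 * u) * I1 + 6 * θ * I0 - 2 * J := by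
    rw [hI2, hI1, hI0, hJ]
    have ia : Integrable (fun v : ℝ => -2 * (v ^ 2 * g₁ v)) := hiv2g₁.const_mul _
    have ib : Integrable (fun v : ℝ => 2 * u * (v * g₁ v)) := hivg₁.const_mul _
    have ic : Integrable (fun v : ℝ => 6 * θ * g₁ v) := hig₁.const_mul _
    have id' : Integrable (fun v : ℝ => 2 * g₂ v) := hig₂.const_mul _
    have iab : Integrable (fun v : ℝ => -2 * (v ^ 2 * g₁ v) + 2 * u * (v * g₁ v)) := by
      exact ia.add ib
    have iabc : Integrable
        (fun v : ℝ => -2 * (v ^ 2 * g₁ v) + 2 * u * (v * g₁ v) + 6 * θ * g₁ v) := by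
      exact iab.add ic
    rw [integral_sub iabc id', integral_add iab ic, integral_add ia ib,
      integral_const_mul, integral_const_mul, integral_const_mul, integral_const_mul]
  rw [hGval]
  have hI0n : I0 = n := hn_def.symm
  rw [hI0n, hI1u] at hθ3n ⊢
  linear_combination hθ3n
end
end

section
/- Define φ₁, φ₂, φ₃ : ℝ → ℝ by: for y ∈ (0,1), φ₁(y) = (1/3)√(1/2)·(1 − 24y + 30y²), φ₂(y) = (1/2)√(3/2)·(3 − 16y + 15y²), φ₃(y) = (1/3)√(5/2)·(4 − 15y + 12y²); for y ∈ (−1,0), φᵢ(y) = (−1)ⁱ φᵢ(−y); and φᵢ = 0 outside [−1,1]. Set γᵢ(y) := √2 φᵢ(2y − 1). Define the wavelet family on (0,1) by: for level ℓ = 0, g⁰₀ⁱ(y) := √(2i − 1)·Pᵢ₋₁(2y − 1) for i = 1,2,3, where Pₘ is the degree-m Legendre polynomial on [−1,1]; and for level ℓ ≥ 1 and level index j ∈ {0, …, 2^{ℓ−1} − 1}, g^i_{ℓ,j}(y) := 2^{(ℓ−1)/2} γᵢ(2^{ℓ−1} y − j) for i = 1,2,3. Then the whole family is orthonormal in L²(0,1):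 for all levels ℓ, ℓ′ ≥ 0, admissible level indices j, j′, and i, i′ ∈ {1,2,3}, ∫₀¹ g^i_{ℓ,j}(y) g^{i′}_{ℓ′,j′}(y) dy = δ_{ii′} δ_{ℓℓ′} δ_{jj′}. -/
open MeasureTheory

noncomputable section

/-- The degree-2 Alpert wavelets `φ₁, φ₂, φ₃` on `(0,1)` (indexed by `i : Fin 3`). -/
def alpertBody (i : Fin 3) (y : ℝ) : ℝ :=
  match i with
  | 0 => (1 / 3) * Real.sqrt (1 / 2) * (1 - 24 * y + 30 * y ^ 2)
  | 1 => (1 / 2) * Real.sqrt (3 / 2) * (3 - 16 * y + 15 * y ^ 2)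
  | 2 => (1 / 3) * Real.sqrt (5 / 2) * (4 - 15 * y + 12 * y ^ 2)

/-- The degree-2 Alpert wavelet `φ_{i+1} : ℝ → ℝ`, extended to `(-1,0)` by the parity rule
`φᵢ(y) = (−1)ⁱ φᵢ(−y)` and by zero outside `(-1,1)`. -/
def alpert (i : Fin 3) (y : ℝ) : ℝ :=
  if 0 < y ∧ y < 1 then alpertBody i y
  else if -1 < y ∧ y < 0 then (-1 : ℝ) ^ ((i : ℕ) + 1) * alpertBody i (-y)
  else 0

/-- `γᵢ(y) := √2 φᵢ(2y − 1)`, the Alpert wavelet rescaled to `[0,1]`. -/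
def gammaW (i : Fin 3) (y : ℝ) : ℝ :=
  Real.sqrt 2 * alpert i (2 * y - 1)

/-- The Legendre polynomial `Pₘ` of degree `m ∈ {0,1,2}` on `[-1,1]`. -/
def legP (m : Fin 3) (y : ℝ) : ℝ :=
  match m with
  | 0 => 1
  | 1 => y
  | 2 => (3 * y ^ 2 - 1) / 2

/-- The multiwavelet basis function `g^i_{ℓ,j}` of degree `k = 2` on `(0,1)`:
at level `ℓ = 0` the `L²(0,1)`-normalized shifted Legendre polynomials
`√(2i−1) P_{i−1}(2y−1)`, and at level `ℓ ≥ 1` the scaled/shifted Alpert wavelets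
`2^{(ℓ−1)/2} γᵢ(2^{ℓ−1} y − j)`. (Here `i : Fin 3` corresponds to `i + 1 ∈ {1,2,3}`.) -/
def multiwavelet (ℓ j : ℕ) (i : Fin 3) (y : ℝ) : ℝ :=
  if ℓ = 0 then Real.sqrt (2 * (i : ℕ) + 1) * legP i (2 * y - 1)
  else (2 : ℝ) ^ (((ℓ : ℝ) - 1) / 2) * gammaW i ((2 : ℝ) ^ (ℓ - 1) * y - (j : ℝ))

section helpers

lemma hasDerivAt_monomial (a : ℝ) (n : ℕ) (x : ℝ) :
    HasDerivAt (fun x : ℝ => a * x ^ (n+1) / (n+1)) (a * x ^ n) x := by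
  have h := (hasDerivAt_pow (n+1) x).const_mul (a/(n+1))
  have he : (fun y : ℝ => a/(n+1) * y^(n+1)) = fun y : ℝ => a * y^(n+1)/(n+1) := by
    funext y; ring
  rw [he] at h
  refine h.congr_deriv ?_
  have : ((n:ℝ)+1) ≠ 0 := by positivity
  push_cast
  field_simp

lemma integral_quartic (a₀ a₁ a₂ a₃ a₄ s t : ℝ) :
    ∫ x in s..t, (a₀ + a₁*x + a₂*x^2 + a₃*x^3 + a₄*x^4) =
      (a₀*t + a₁*t^2/2 + a₂*t^3/3 + a₃*t^4/4 + a₄*t^5/5)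
        - (a₀*s + a₁*s^2/2 + a₂*s^3/3 + a₃*s^4/4 + a₄*s^5/5) := by
  have key := intervalIntegral.integral_eq_sub_of_hasDerivAt
    (f := fun x : ℝ => a₀*x^1/1 + a₁*x^2/2 + a₂*x^3/3 + a₃*x^4/4 + a₄*x^5/5)
    (f' := fun x : ℝ => a₀ + a₁*x + a₂*x^2 + a₃*x^3 + a₄*x^4) (a := s) (b := t)
    (by
      intro x _
      have h1 := hasDerivAt_monomial a₀ 0 x
      have h2 := hasDerivAt_monomial a₁ 1 x
      have h3 := hasDerivAt_monomial a₂ 2 x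
      have h4 := hasDerivAt_monomial a₃ 3 x
      have h5 := hasDerivAt_monomial a₄ 4 x
      norm_num at h1 h2 h3 h4 h5 ⊢
      exact (((h1.add h2).add h3).add h4).add h5)
    (by apply Continuous.intervalIntegrable; fun_prop)
  rw [key]; ring

lemma integral_quad_mul (b₀ b₁ b₂ c₀ c₁ c₂ s t : ℝ) :
    ∫ x in s..t, ((b₀ + b₁*x + b₂*x^2) * (c₀ + c₁*x + c₂*x^2)) =
      ((b₀*c₀)*t + (b₀*c₁+b₁*c₀)*t^2/2 + (b₀*c₂+b₁*c₁+b₂*c₀)*t^3/3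
        + (b₁*c₂+b₂*c₁)*t^4/4 + (b₂*c₂)*t^5/5)
      - ((b₀*c₀)*s + (b₀*c₁+b₁*c₀)*s^2/2 + (b₀*c₂+b₁*c₁+b₂*c₀)*s^3/3
        + (b₁*c₂+b₂*c₁)*s^4/4 + (b₂*c₂)*s^5/5) := by
  rw [show (fun x => (b₀ + b₁*x + b₂*x^2) * (c₀ + c₁*x + c₂*x^2))
      = fun x => (b₀*c₀) + (b₀*c₁+b₁*c₀)*x + (b₀*c₂+b₁*c₁+b₂*c₀)*x^2
          + (b₁*c₂+b₂*c₁)*x^3 + (b₂*c₂)*x^4 from funext fun x => by ring]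
  exact integral_quartic _ _ _ _ _ s t

lemma intInt_congr_Ioo {f g : ℝ → ℝ} {a b : ℝ} (hab : a ≤ b)
    (h : Set.EqOn f g (Set.Ioo a b)) : ∫ x in a..b, f x = ∫ x in a..b, g x := by
  rw [intervalIntegral.integral_of_le hab, intervalIntegral.integral_of_le hab,
    integral_Ioc_eq_integral_Ioo, integral_Ioc_eq_integral_Ioo]
  exact setIntegral_congr_fun measurableSet_Ioo h

lemma intervalIntegrable_of_eqOn_Ioo {f g : ℝ → ℝ} {a b : ℝ} (hab : a ≤ b)
    (h : Set.EqOn f g (Set.Ioo a b)) (hg : Continuous g) :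
    IntervalIntegrable f MeasureTheory.volume a b := by
  rw [intervalIntegrable_iff, Set.uIoc_of_le hab]
  apply (hg.integrableOn_Ioc (a := a) (b := b)).congr
  rw [← Measure.restrict_congr_set Ioo_ae_eq_Ioc]
  filter_upwards [ae_restrict_mem measurableSet_Ioo] with x hx using (h hx).symm

end helpers

lemma alpert_pos (i : Fin 3) {t : ℝ} (h : t ∈ Set.Ioo (0:ℝ) 1) :
    alpert i t = alpertBody i t := by
  have h' := Set.mem_Ioo.mp h
  simp only [alpert, if_pos h']

lemma alpert_neg (i : Fin 3) {t : ℝ} (h : t ∈ Set.Ioo (-1:ℝ) 0) :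
    alpert i t = (-1 : ℝ) ^ ((i : ℕ) + 1) * alpertBody i (-t) := by
  have h' := Set.mem_Ioo.mp h
  have h1 : ¬ (0 < t ∧ t < 1) := by rintro ⟨h1, _⟩; exact absurd h'.2 (not_lt.2 h1.le)
  simp only [alpert, if_neg h1, if_pos h']

lemma alpert_zero (i : Fin 3) {t : ℝ} (h : (t ≤ -1 ∨ 1 ≤ t) ∨ t = 0) :
    alpert i t = 0 := by
  have h1 : ¬ (0 < t ∧ t < 1) := by rintro ⟨u, v⟩; rcases h with (h|h)|h <;> linarith
  have h2 : ¬ (-1 < t ∧ t < 0) := by rintro ⟨u, v⟩; rcases h with (h|h)|h <;> linarith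
  simp only [alpert, if_neg h1, if_neg h2]

lemma gammaW_zero (i : Fin 3) {t : ℝ} (h : t ≤ 0 ∨ 1 ≤ t) : gammaW i t = 0 := by
  have : alpert i (2*t - 1) = 0 := by
    apply alpert_zero
    rcases h with h|h
    · exact Or.inl (Or.inl (by linarith))
    · exact Or.inl (Or.inr (by linarith))
  simp [gammaW, this]

/-- positive-side integral of `alpert` against a quadratic -/
lemma int_alpert_pos (i : Fin 3) (b₀ b₁ b₂ c₀ c₁ c₂ : ℝ)
    (hb : ∀ y, alpertBody i y = b₀ + b₁*y + b₂*y^2) :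
    ∫ x in (0:ℝ)..1, alpert i x * (c₀ + c₁*x + c₂*x^2)
      = b₀*c₀ + (b₀*c₁+b₁*c₀)/2 + (b₀*c₂+b₁*c₁+b₂*c₀)/3 + (b₁*c₂+b₂*c₁)/4 + b₂*c₂/5 := by
  rw [intInt_congr_Ioo (by norm_num)
    (g := fun x => (b₀ + b₁*x + b₂*x^2) * (c₀ + c₁*x + c₂*x^2))
    (fun x hx => by rw [alpert_pos i hx, hb])]
  rw [integral_quad_mul]; ring

/-- negative-side integral of `alpert` against a quadratic -/
lemma int_alpert_neg (i : Fin 3) (b₀ b₁ b₂ c₀ c₁ c₂ : ℝ)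
    (hb : ∀ y, alpertBody i y = b₀ + b₁*y + b₂*y^2) :
    ∫ x in (-1:ℝ)..0, alpert i x * (c₀ + c₁*x + c₂*x^2)
      = (-1 : ℝ) ^ ((i : ℕ) + 1) *
        (b₀*c₀ + (b₀*(-c₁)+b₁*c₀)/2 + (b₀*c₂+b₁*(-c₁)+b₂*c₀)/3
          + (b₁*c₂+b₂*(-c₁))/4 + b₂*c₂/5) := by
  set E : ℝ := (-1 : ℝ) ^ ((i : ℕ) + 1) with hE
  rw [intInt_congr_Ioo (by norm_num)
    (g := fun x => (E*b₀ + (-(E*b₁))*x + (E*b₂)*x^2) * (c₀ + c₁*x + c₂*x^2))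
    (fun x hx => by rw [alpert_neg i hx, hb]; push_cast; ring)]
  rw [integral_quad_mul]; ring

lemma intervalIntegrable_alpert_poly (i : Fin 3) (c₀ c₁ c₂ : ℝ) :
    IntervalIntegrable (fun x => alpert i x * (c₀ + c₁*x + c₂*x^2))
      MeasureTheory.volume (-1) 0 ∧
    IntervalIntegrable (fun x => alpert i x * (c₀ + c₁*x + c₂*x^2))
      MeasureTheory.volume 0 1 := by
  obtain ⟨b₀, b₁, b₂, hb⟩ : ∃ b₀ b₁ b₂ : ℝ, ∀ y, alpertBody i y = b₀ + b₁*y + b₂*y^2 := by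
    fin_cases i
    · exact ⟨(1/3)*Real.sqrt (1/2), -8*Real.sqrt (1/2), 10*Real.sqrt (1/2),
        fun y => by simp [alpertBody]; ring⟩
    · exact ⟨(3/2)*Real.sqrt (3/2), -8*Real.sqrt (3/2), (15/2)*Real.sqrt (3/2),
        fun y => by simp [alpertBody]; ring⟩
    · exact ⟨(4/3)*Real.sqrt (5/2), -5*Real.sqrt (5/2), 4*Real.sqrt (5/2),
        fun y => by simp [alpertBody]; ring⟩
  constructor
  · apply intervalIntegrable_of_eqOn_Ioo (by norm_num)
      (g := fun x => ((-1:ℝ)^((i:ℕ)+1)*(b₀ - b₁*x + b₂*x^2)) * (c₀ + c₁*x + c₂*x^2))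
      (fun x hx => by rw [alpert_neg i hx, hb]; push_cast; ring)
    fun_prop
  · apply intervalIntegrable_of_eqOn_Ioo (by norm_num)
      (g := fun x => (b₀ + b₁*x + b₂*x^2) * (c₀ + c₁*x + c₂*x^2))
      (fun x hx => by rw [alpert_pos i hx, hb])
    fun_prop

/-- quadratic coefficients for `alpertBody` -/
lemma alpertBody_quad (i : Fin 3) :
    ∃ b₀ b₁ b₂ : ℝ, ∀ y, alpertBody i y = b₀ + b₁*y + b₂*y^2 := by
  fin_cases i
  · exact ⟨(1/3)*Real.sqrt (1/2), -8*Real.sqrt (1/2), 10*Real.sqrt (1/2),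
      fun y => by simp [alpertBody]; ring⟩
  · exact ⟨(3/2)*Real.sqrt (3/2), -8*Real.sqrt (3/2), (15/2)*Real.sqrt (3/2),
      fun y => by simp [alpertBody]; ring⟩
  · exact ⟨(4/3)*Real.sqrt (5/2), -5*Real.sqrt (5/2), 4*Real.sqrt (5/2),
      fun y => by simp [alpertBody]; ring⟩

/-- vanishing moments of the Alpert wavelets -/
lemma alpert_moment (i : Fin 3) (c₀ c₁ c₂ : ℝ) :
    ∫ t in (-1:ℝ)..1, alpert i t * (c₀ + c₁*t + c₂*t^2) = 0 := by
  obtain ⟨h1, h2⟩ := intervalIntegrable_alpert_poly i c₀ c₁ c₂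
  rw [← intervalIntegral.integral_add_adjacent_intervals h1 h2]
  fin_cases i
  · rw [int_alpert_pos _ ((1/3)*Real.sqrt (1/2)) (-8*Real.sqrt (1/2)) (10*Real.sqrt (1/2))
        c₀ c₁ c₂ (fun y => by simp [alpertBody]; ring),
      int_alpert_neg _ ((1/3)*Real.sqrt (1/2)) (-8*Real.sqrt (1/2)) (10*Real.sqrt (1/2))
        c₀ c₁ c₂ (fun y => by simp [alpertBody]; ring)]
    norm_num
    ring
  · rw [int_alpert_pos _ ((3/2)*Real.sqrt (3/2)) (-8*Real.sqrt (3/2)) ((15/2)*Real.sqrt (3/2))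
        c₀ c₁ c₂ (fun y => by simp [alpertBody]; ring),
      int_alpert_neg _ ((3/2)*Real.sqrt (3/2)) (-8*Real.sqrt (3/2)) ((15/2)*Real.sqrt (3/2))
        c₀ c₁ c₂ (fun y => by simp [alpertBody]; ring)]
    norm_num
    ring
  · rw [int_alpert_pos _ ((4/3)*Real.sqrt (5/2)) (-5*Real.sqrt (5/2)) (4*Real.sqrt (5/2))
        c₀ c₁ c₂ (fun y => by simp [alpertBody]; ring),
      int_alpert_neg _ ((4/3)*Real.sqrt (5/2)) (-5*Real.sqrt (5/2)) (4*Real.sqrt (5/2))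
        c₀ c₁ c₂ (fun y => by simp [alpertBody]; ring)]
    norm_num
    ring

lemma int_alpert_mul_pos (i i' : Fin 3) (b₀ b₁ b₂ d₀ d₁ d₂ : ℝ)
    (hb : ∀ y, alpertBody i y = b₀ + b₁*y + b₂*y^2)
    (hd : ∀ y, alpertBody i' y = d₀ + d₁*y + d₂*y^2) :
    ∫ x in (0:ℝ)..1, alpert i x * alpert i' x
      = b₀*d₀ + (b₀*d₁+b₁*d₀)/2 + (b₀*d₂+b₁*d₁+b₂*d₀)/3 + (b₁*d₂+b₂*d₁)/4 + b₂*d₂/5 := by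
  rw [intInt_congr_Ioo (by norm_num)
    (g := fun x => (b₀ + b₁*x + b₂*x^2) * (d₀ + d₁*x + d₂*x^2))
    (fun x hx => by rw [alpert_pos i hx, alpert_pos i' hx, hb, hd])]
  rw [integral_quad_mul]; ring

lemma int_alpert_mul_neg (i i' : Fin 3) (b₀ b₁ b₂ d₀ d₁ d₂ : ℝ)
    (hb : ∀ y, alpertBody i y = b₀ + b₁*y + b₂*y^2)
    (hd : ∀ y, alpertBody i' y = d₀ + d₁*y + d₂*y^2) :
    ∫ x in (-1:ℝ)..0, alpert i x * alpert i' x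
      = (-1:ℝ)^((i:ℕ)+(i':ℕ)) *
        (b₀*d₀ + (b₀*d₁+b₁*d₀)/2 + (b₀*d₂+b₁*d₁+b₂*d₀)/3 + (b₁*d₂+b₂*d₁)/4 + b₂*d₂/5) := by
  set E : ℝ := (-1 : ℝ) ^ ((i : ℕ) + 1) with hE
  set E' : ℝ := (-1 : ℝ) ^ ((i' : ℕ) + 1) with hE'
  have hEE : E * E' = (-1:ℝ)^((i:ℕ)+(i':ℕ)) := by
    rw [hE, hE', ← pow_add]
    rw [show (i:ℕ) + 1 + ((i':ℕ) + 1) = ((i:ℕ) + (i':ℕ)) + 2 by ring, pow_add]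
    norm_num
  rw [intInt_congr_Ioo (by norm_num)
    (g := fun x => ((E*E')*b₀ + (-((E*E')*b₁))*x + ((E*E')*b₂)*x^2) * (d₀ + (-d₁)*x + d₂*x^2))
    (fun x hx => by rw [alpert_neg i hx, alpert_neg i' hx, hb, hd]; push_cast; ring)]
  rw [integral_quad_mul, ← hEE]; ring

lemma intervalIntegrable_alpert_mul (i i' : Fin 3) :
    IntervalIntegrable (fun x => alpert i x * alpert i' x)
      MeasureTheory.volume (-1) 0 ∧
    IntervalIntegrable (fun x => alpert i x * alpert i' x)
      MeasureTheory.volume 0 1 := by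
  obtain ⟨b₀, b₁, b₂, hb⟩ := alpertBody_quad i
  obtain ⟨d₀, d₁, d₂, hd⟩ := alpertBody_quad i'
  constructor
  · apply intervalIntegrable_of_eqOn_Ioo (by norm_num)
      (g := fun x => ((-1:ℝ)^((i:ℕ)+1)*(b₀ - b₁*x + b₂*x^2)) *
        ((-1:ℝ)^((i':ℕ)+1)*(d₀ - d₁*x + d₂*x^2)))
      (fun x hx => by rw [alpert_neg i hx, alpert_neg i' hx, hb, hd]; push_cast; ring)
    fun_prop
  · apply intervalIntegrable_of_eqOn_Ioo (by norm_num)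
      (g := fun x => (b₀ + b₁*x + b₂*x^2) * (d₀ + d₁*x + d₂*x^2))
      (fun x hx => by rw [alpert_pos i hx, alpert_pos i' hx, hb, hd])
    fun_prop

set_option maxHeartbeats 2000000 in
lemma alpert_orthonormal (i i' : Fin 3) :
    ∫ t in (-1:ℝ)..1, alpert i t * alpert i' t = if i = i' then 1 else 0 := by
  obtain ⟨h1, h2⟩ := intervalIntegrable_alpert_mul i i'
  rw [← intervalIntegral.integral_add_adjacent_intervals h1 h2]
  have t1 : Real.sqrt (1/2)^2 = 1/2 := Real.sq_sqrt (by norm_num)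
  have t2 : Real.sqrt (3/2)^2 = 3/2 := Real.sq_sqrt (by norm_num)
  have t3 : Real.sqrt (5/2)^2 = 5/2 := Real.sq_sqrt (by norm_num)
  fin_cases i <;> fin_cases i'
  · rw [int_alpert_mul_pos _ _ (((1:ℝ)/3)*Real.sqrt (1/2)) ((-8)*Real.sqrt (1/2)) (10*Real.sqrt (1/2)) (((1:ℝ)/3)*Real.sqrt (1/2)) ((-8)*Real.sqrt (1/2)) (10*Real.sqrt (1/2)) (fun y => by simp [alpertBody]; ring) (fun y => by simp [alpertBody]; ring),
        int_alpert_mul_neg _ _ (((1:ℝ)/3)*Real.sqrt (1/2)) ((-8)*Real.sqrt (1/2)) (10*Real.sqrt (1/2)) (((1:ℝ)/3)*Real.sqrt (1/2)) ((-8)*Real.sqrt (1/2)) (10*Real.sqrt (1/2)) (fun y => by simp [alpertBody]; ring) (fun y => by simp [alpertBody]; ring)]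
    norm_num
    all_goals ring_nf
    all_goals norm_num [Fin.ext_iff, inv_pow, Real.sq_sqrt]
  · rw [int_alpert_mul_pos _ _ (((1:ℝ)/3)*Real.sqrt (1/2)) ((-8)*Real.sqrt (1/2)) (10*Real.sqrt (1/2)) (((3:ℝ)/2)*Real.sqrt (3/2)) ((-8)*Real.sqrt (3/2)) (((15:ℝ)/2)*Real.sqrt (3/2)) (fun y => by simp [alpertBody]; ring) (fun y => by simp [alpertBody]; ring),
        int_alpert_mul_neg _ _ (((1:ℝ)/3)*Real.sqrt (1/2)) ((-8)*Real.sqrt (1/2)) (10*Real.sqrt (1/2)) (((3:ℝ)/2)*Real.sqrt (3/2)) ((-8)*Real.sqrt (3/2)) (((15:ℝ)/2)*Real.sqrt (3/2)) (fun y => by simp [alpertBody]; ring) (fun y => by simp [alpertBody]; ring)]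
    norm_num
    all_goals ring_nf
    all_goals norm_num [Fin.ext_iff, inv_pow, Real.sq_sqrt]
  · rw [int_alpert_mul_pos _ _ (((1:ℝ)/3)*Real.sqrt (1/2)) ((-8)*Real.sqrt (1/2)) (10*Real.sqrt (1/2)) (((4:ℝ)/3)*Real.sqrt (5/2)) ((-5)*Real.sqrt (5/2)) (4*Real.sqrt (5/2)) (fun y => by simp [alpertBody]; ring) (fun y => by simp [alpertBody]; ring),
        int_alpert_mul_neg _ _ (((1:ℝ)/3)*Real.sqrt (1/2)) ((-8)*Real.sqrt (1/2)) (10*Real.sqrt (1/2)) (((4:ℝ)/3)*Real.sqrt (5/2)) ((-5)*Real.sqrt (5/2)) (4*Real.sqrt (5/2)) (fun y => by simp [alpertBody]; ring) (fun y => by simp [alpertBody]; ring)]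
    norm_num
    all_goals ring_nf
    all_goals norm_num [Fin.ext_iff, inv_pow, Real.sq_sqrt]
  · rw [int_alpert_mul_pos _ _ (((3:ℝ)/2)*Real.sqrt (3/2)) ((-8)*Real.sqrt (3/2)) (((15:ℝ)/2)*Real.sqrt (3/2)) (((1:ℝ)/3)*Real.sqrt (1/2)) ((-8)*Real.sqrt (1/2)) (10*Real.sqrt (1/2)) (fun y => by simp [alpertBody]; ring) (fun y => by simp [alpertBody]; ring),
        int_alpert_mul_neg _ _ (((3:ℝ)/2)*Real.sqrt (3/2)) ((-8)*Real.sqrt (3/2)) (((15:ℝ)/2)*Real.sqrt (3/2)) (((1:ℝ)/3)*Real.sqrt (1/2)) ((-8)*Real.sqrt (1/2)) (10*Real.sqrt (1/2)) (fun y => by simp [alpertBody]; ring) (fun y => by simp [alpertBody]; ring)]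
    norm_num
    all_goals ring_nf
    all_goals norm_num [Fin.ext_iff, inv_pow, Real.sq_sqrt]
  · rw [int_alpert_mul_pos _ _ (((3:ℝ)/2)*Real.sqrt (3/2)) ((-8)*Real.sqrt (3/2)) (((15:ℝ)/2)*Real.sqrt (3/2)) (((3:ℝ)/2)*Real.sqrt (3/2)) ((-8)*Real.sqrt (3/2)) (((15:ℝ)/2)*Real.sqrt (3/2)) (fun y => by simp [alpertBody]; ring) (fun y => by simp [alpertBody]; ring),
        int_alpert_mul_neg _ _ (((3:ℝ)/2)*Real.sqrt (3/2)) ((-8)*Real.sqrt (3/2)) (((15:ℝ)/2)*Real.sqrt (3/2)) (((3:ℝ)/2)*Real.sqrt (3/2)) ((-8)*Real.sqrt (3/2)) (((15:ℝ)/2)*Real.sqrt (3/2)) (fun y => by simp [alpertBody]; ring) (fun y => by simp [alpertBody]; ring)]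
    norm_num
    all_goals ring_nf
    all_goals norm_num [Fin.ext_iff, inv_pow, Real.sq_sqrt]
  · rw [int_alpert_mul_pos _ _ (((3:ℝ)/2)*Real.sqrt (3/2)) ((-8)*Real.sqrt (3/2)) (((15:ℝ)/2)*Real.sqrt (3/2)) (((4:ℝ)/3)*Real.sqrt (5/2)) ((-5)*Real.sqrt (5/2)) (4*Real.sqrt (5/2)) (fun y => by simp [alpertBody]; ring) (fun y => by simp [alpertBody]; ring),
        int_alpert_mul_neg _ _ (((3:ℝ)/2)*Real.sqrt (3/2)) ((-8)*Real.sqrt (3/2)) (((15:ℝ)/2)*Real.sqrt (3/2)) (((4:ℝ)/3)*Real.sqrt (5/2)) ((-5)*Real.sqrt (5/2)) (4*Real.sqrt (5/2)) (fun y => by simp [alpertBody]; ring) (fun y => by simp [alpertBody]; ring)]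
    norm_num
    all_goals ring_nf
    all_goals norm_num [Fin.ext_iff, inv_pow, Real.sq_sqrt]
  · rw [int_alpert_mul_pos _ _ (((4:ℝ)/3)*Real.sqrt (5/2)) ((-5)*Real.sqrt (5/2)) (4*Real.sqrt (5/2)) (((1:ℝ)/3)*Real.sqrt (1/2)) ((-8)*Real.sqrt (1/2)) (10*Real.sqrt (1/2)) (fun y => by simp [alpertBody]; ring) (fun y => by simp [alpertBody]; ring),
        int_alpert_mul_neg _ _ (((4:ℝ)/3)*Real.sqrt (5/2)) ((-5)*Real.sqrt (5/2)) (4*Real.sqrt (5/2)) (((1:ℝ)/3)*Real.sqrt (1/2)) ((-8)*Real.sqrt (1/2)) (10*Real.sqrt (1/2)) (fun y => by simp [alpertBody]; ring) (fun y => by simp [alpertBody]; ring)]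
    norm_num
    all_goals ring_nf
    all_goals norm_num [Fin.ext_iff, inv_pow, Real.sq_sqrt]
  · rw [int_alpert_mul_pos _ _ (((4:ℝ)/3)*Real.sqrt (5/2)) ((-5)*Real.sqrt (5/2)) (4*Real.sqrt (5/2)) (((3:ℝ)/2)*Real.sqrt (3/2)) ((-8)*Real.sqrt (3/2)) (((15:ℝ)/2)*Real.sqrt (3/2)) (fun y => by simp [alpertBody]; ring) (fun y => by simp [alpertBody]; ring),
        int_alpert_mul_neg _ _ (((4:ℝ)/3)*Real.sqrt (5/2)) ((-5)*Real.sqrt (5/2)) (4*Real.sqrt (5/2)) (((3:ℝ)/2)*Real.sqrt (3/2)) ((-8)*Real.sqrt (3/2)) (((15:ℝ)/2)*Real.sqrt (3/2)) (fun y => by simp [alpertBody]; ring) (fun y => by simp [alpertBody]; ring)]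
    norm_num
    all_goals ring_nf
    all_goals norm_num [Fin.ext_iff, inv_pow, Real.sq_sqrt]
  · rw [int_alpert_mul_pos _ _ (((4:ℝ)/3)*Real.sqrt (5/2)) ((-5)*Real.sqrt (5/2)) (4*Real.sqrt (5/2)) (((4:ℝ)/3)*Real.sqrt (5/2)) ((-5)*Real.sqrt (5/2)) (4*Real.sqrt (5/2)) (fun y => by simp [alpertBody]; ring) (fun y => by simp [alpertBody]; ring),
        int_alpert_mul_neg _ _ (((4:ℝ)/3)*Real.sqrt (5/2)) ((-5)*Real.sqrt (5/2)) (4*Real.sqrt (5/2)) (((4:ℝ)/3)*Real.sqrt (5/2)) ((-5)*Real.sqrt (5/2)) (4*Real.sqrt (5/2)) (fun y => by simp [alpertBody]; ring) (fun y => by simp [alpertBody]; ring)]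
    norm_num
    all_goals ring_nf
    all_goals norm_num [Fin.ext_iff, inv_pow, Real.sq_sqrt]

lemma gammaW_moment (i : Fin 3) (c₀ c₁ c₂ : ℝ) :
    ∫ t in (0:ℝ)..1, gammaW i t * (c₀ + c₁*t + c₂*t^2) = 0 := by
  have step1 : ∫ t in (0:ℝ)..1, gammaW i t * (c₀ + c₁*t + c₂*t^2)
      = ∫ t in (0:ℝ)..1, (fun s => Real.sqrt 2 *
          (alpert i s * ((c₀+c₁/2+c₂/4) + (c₁/2+c₂/2)*s + (c₂/4)*s^2))) (2*t - 1) := by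
    apply intervalIntegral.integral_congr
    intro t _
    simp only [gammaW]
    ring
  have step2 := intervalIntegral.integral_comp_mul_sub (a := (0:ℝ)) (b := 1)
    (fun s => Real.sqrt 2 *
      (alpert i s * ((c₀+c₁/2+c₂/4) + (c₁/2+c₂/2)*s + (c₂/4)*s^2))) two_ne_zero 1
  rw [step1, step2,
    show (2*(0:ℝ)-1) = -1 by norm_num, show (2*(1:ℝ)-1) = 1 by norm_num,
    intervalIntegral.integral_const_mul, alpert_moment]
  simp

lemma gammaW_orthonormal (i i' : Fin 3) :
    ∫ t in (0:ℝ)..1, gammaW i t * gammaW i' t = if i = i' then 1 else 0 := by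
  have step1 : ∫ t in (0:ℝ)..1, gammaW i t * gammaW i' t
      = ∫ t in (0:ℝ)..1, (fun s => (Real.sqrt 2 * Real.sqrt 2) *
          (alpert i s * alpert i' s)) (2*t - 1) := by
    apply intervalIntegral.integral_congr
    intro t _
    simp only [gammaW]
    ring
  have step2 := intervalIntegral.integral_comp_mul_sub (a := (0:ℝ)) (b := 1)
    (fun s => (Real.sqrt 2 * Real.sqrt 2) * (alpert i s * alpert i' s)) two_ne_zero 1
  rw [step1, step2,
    show (2*(0:ℝ)-1) = -1 by norm_num, show (2*(1:ℝ)-1) = 1 by norm_num,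
    intervalIntegral.integral_const_mul, alpert_orthonormal,
    Real.mul_self_sqrt (by norm_num : (0:ℝ) ≤ 2)]
  rcases eq_or_ne i i' with h | h <;> simp [h]

lemma alpertBody_measurable (i : Fin 3) : Measurable (alpertBody i) := by
  unfold alpertBody
  fin_cases i <;> fun_prop

lemma alpert_measurable (i : Fin 3) : Measurable (alpert i) := by
  unfold alpert
  apply Measurable.ite
  · exact (measurableSet_Ioi.inter measurableSet_Iio : MeasurableSet {y : ℝ | 0 < y ∧ y < 1})
  · exact alpertBody_measurable i
  apply Measurable.ite
  · exact (measurableSet_Ioi.inter measurableSet_Iio : MeasurableSet {y : ℝ | -1 < y ∧ y < 0})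
  · exact ((alpertBody_measurable i).comp measurable_neg).const_mul _
  · fun_prop

lemma gammaW_measurable (i : Fin 3) : Measurable (gammaW i) := by
  unfold gammaW
  exact ((alpert_measurable i).comp (by fun_prop)).const_mul _

lemma alpertBody_bound (i : Fin 3) {y : ℝ} (h0 : 0 ≤ y) (h1 : y ≤ 1) :
    |alpertBody i y| ≤ 50 := by
  have hs1 : Real.sqrt (1/2) ≤ 2 := by
    nlinarith [Real.sq_sqrt (show (0:ℝ) ≤ 1/2 by norm_num), Real.sqrt_nonneg (1/2:ℝ)]
  have hs2 : Real.sqrt (3/2) ≤ 2 := by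
    nlinarith [Real.sq_sqrt (show (0:ℝ) ≤ 3/2 by norm_num), Real.sqrt_nonneg (3/2:ℝ)]
  have hs3 : Real.sqrt (5/2) ≤ 2 := by
    nlinarith [Real.sq_sqrt (show (0:ℝ) ≤ 5/2 by norm_num), Real.sqrt_nonneg (5/2:ℝ)]
  have n1 := Real.sqrt_nonneg (1/2:ℝ)
  have n2 := Real.sqrt_nonneg (3/2:ℝ)
  have n3 := Real.sqrt_nonneg (5/2:ℝ)
  fin_cases i <;> simp only [alpertBody] <;> rw [abs_mul]
  · have hw : |(1:ℝ)/3 * Real.sqrt (1/2)| ≤ 1 := by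
      rw [abs_of_nonneg (by positivity)]; nlinarith
    have hp : |1 - 24*y + 30*y^2| ≤ 50 := abs_le.mpr ⟨by nlinarith, by nlinarith⟩
    calc |(1:ℝ)/3 * Real.sqrt (1/2)| * |1 - 24*y + 30*y^2| ≤ 1 * 50 :=
          mul_le_mul hw hp (abs_nonneg _) one_pos.le
      _ = 50 := by norm_num
  · have hw : |(1:ℝ)/2 * Real.sqrt (3/2)| ≤ 1 := by
      rw [abs_of_nonneg (by positivity)]; nlinarith
    have hp : |3 - 16*y + 15*y^2| ≤ 50 := abs_le.mpr ⟨by nlinarith, by nlinarith⟩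
    calc |(1:ℝ)/2 * Real.sqrt (3/2)| * |3 - 16*y + 15*y^2| ≤ 1 * 50 :=
          mul_le_mul hw hp (abs_nonneg _) one_pos.le
      _ = 50 := by norm_num
  · have hw : |(1:ℝ)/3 * Real.sqrt (5/2)| ≤ 1 := by
      rw [abs_of_nonneg (by positivity)]; nlinarith
    have hp : |4 - 15*y + 12*y^2| ≤ 50 := abs_le.mpr ⟨by nlinarith, by nlinarith⟩
    calc |(1:ℝ)/3 * Real.sqrt (5/2)| * |4 - 15*y + 12*y^2| ≤ 1 * 50 :=
          mul_le_mul hw hp (abs_nonneg _) one_pos.le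
      _ = 50 := by norm_num

lemma alpert_bound (i : Fin 3) (y : ℝ) : |alpert i y| ≤ 50 := by
  unfold alpert
  split_ifs with h1 h2
  · exact alpertBody_bound i h1.1.le h1.2.le
  · rw [abs_mul, abs_pow, abs_neg, abs_one, one_pow, one_mul]
    exact alpertBody_bound i (by linarith [h2.2]) (by linarith [h2.1])
  · simp

lemma gammaW_bound (i : Fin 3) (y : ℝ) : |gammaW i y| ≤ 100 := by
  unfold gammaW
  rw [abs_mul]
  have hs : |Real.sqrt 2| ≤ 2 := by
    rw [abs_of_nonneg (Real.sqrt_nonneg _)]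
    nlinarith [Real.sq_sqrt (show (0:ℝ) ≤ 2 by norm_num), Real.sqrt_nonneg (2:ℝ)]
  calc |Real.sqrt 2| * |alpert i (2*y-1)| ≤ 2 * 50 :=
        mul_le_mul hs (alpert_bound i _) (abs_nonneg _) (by norm_num)
    _ = 100 := by norm_num

lemma bdd_meas_intervalIntegrable {f : ℝ → ℝ} (hm : Measurable f) (C : ℝ)
    (hb : ∀ x, |f x| ≤ C) (a b : ℝ) : IntervalIntegrable f MeasureTheory.volume a b := by
  rw [intervalIntegrable_iff]
  apply MeasureTheory.Integrable.mono' (g := fun _ => C)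
    (MeasureTheory.integrableOn_const measure_Ioc_lt_top.ne)
  · exact hm.aestronglyMeasurable
  · filter_upwards with x using by simpa using hb x

lemma intervalIntegrable_gammaW (i : Fin 3) (a b : ℝ) :
    IntervalIntegrable (gammaW i) MeasureTheory.volume a b :=
  bdd_meas_intervalIntegrable (gammaW_measurable i) 100 (gammaW_bound i) a b

lemma intervalIntegrable_gammaW_mul (i i' : Fin 3) (K a b : ℝ) :
    IntervalIntegrable (fun t => K * (gammaW i t * gammaW i' t))
      MeasureTheory.volume a b := by
  apply IntervalIntegrable.const_mul
  apply bdd_meas_intervalIntegrable ((gammaW_measurable i).mul (gammaW_measurable i')) (100*100)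
  intro x
  rw [Pi.mul_apply, abs_mul]
  exact mul_le_mul (gammaW_bound i x) (gammaW_bound i' x) (abs_nonneg _) (by norm_num)

lemma intervalIntegrable_congr_Ioo {f g : ℝ → ℝ} {a b : ℝ} (hab : a ≤ b)
    (h : Set.EqOn f g (Set.Ioo a b)) (hg : IntervalIntegrable g MeasureTheory.volume a b) :
    IntervalIntegrable f MeasureTheory.volume a b := by
  rw [intervalIntegrable_iff, Set.uIoc_of_le hab]
  rw [intervalIntegrable_iff, Set.uIoc_of_le hab] at hg
  apply hg.congr
  rw [← Measure.restrict_congr_set Ioo_ae_eq_Ioc]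
  filter_upwards [ae_restrict_mem measurableSet_Ioo] with x hx using (h hx).symm

/-- The dyadic rescaling step: integrating `G (2^m y - j)` over `[0,1]` when `G`
vanishes outside `(0,1)` and `j < 2^m`. -/
lemma reduce_to_unit (m j : ℕ) (hj : j < 2^m) (G : ℝ → ℝ)
    (hG0 : ∀ t, t ≤ 0 ∨ 1 ≤ t → G t = 0)
    (hGint : IntervalIntegrable G MeasureTheory.volume 0 1) :
    ∫ y in (0:ℝ)..1, G ((2:ℝ)^m * y - j) = ((2:ℝ)^m)⁻¹ * ∫ t in (0:ℝ)..1, G t := by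
  have h2 : ((2:ℝ)^m) ≠ 0 := by positivity
  have step := intervalIntegral.integral_comp_mul_sub (a := (0:ℝ)) (b := 1) G h2 (j:ℝ)
  rw [step, show ((2:ℝ)^m*0 - j) = -(j:ℝ) by ring, smul_eq_mul]
  congr 1
  have hj1 : (j:ℝ) + 1 ≤ (2:ℝ)^m := by
    have : (j:ℝ) + 1 ≤ ((2^m : ℕ) : ℝ) := by exact_mod_cast hj
    simpa using this
  have hz1 : ∫ t in (-(j:ℝ))..0, G t = 0 := by
    rw [intervalIntegral.integral_congr (g := fun _ => 0)
      (fun t ht => hG0 t (Or.inl (by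
        rcases Set.mem_uIcc.mp ht with h | h
        · exact h.2
        · have : (0:ℝ) ≤ (j:ℝ) := Nat.cast_nonneg j
          linarith [h.2])))]
    simp
  have hz2 : ∫ t in (1:ℝ)..((2:ℝ)^m*1 - j), G t = 0 := by
    rw [intervalIntegral.integral_congr (g := fun _ => 0)
      (fun t ht => hG0 t (Or.inr ((Set.mem_uIcc.mp ht).elim (fun h => h.1)
        (fun h => by linarith [h.2]))))]
    simp
  have i1 : IntervalIntegrable G MeasureTheory.volume (-(j:ℝ)) 0 := by
    apply intervalIntegrable_congr_Ioo (neg_nonpos.mpr (Nat.cast_nonneg j)) (g := fun _ => 0)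
      (fun t ht => hG0 t (Or.inl ht.2.le))
    exact intervalIntegrable_const
  have i3 : IntervalIntegrable G MeasureTheory.volume 1 ((2:ℝ)^m*1 - j) := by
    apply intervalIntegrable_congr_Ioo (by linarith) (g := fun _ => 0)
      (fun t ht => hG0 t (Or.inr ht.1.le))
    exact intervalIntegrable_const
  calc ∫ t in (-(j:ℝ))..((2:ℝ)^m*1 - j), G t
      = (∫ t in (-(j:ℝ))..0, G t) + ∫ t in (0:ℝ)..((2:ℝ)^m*1 - j), G t := by
        rw [intervalIntegral.integral_add_adjacent_intervals i1
          (IntervalIntegrable.trans hGint i3)]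
    _ = (∫ t in (0:ℝ)..1, G t) + ∫ t in (1:ℝ)..((2:ℝ)^m*1 - j), G t := by
        rw [hz1, zero_add, ← intervalIntegral.integral_add_adjacent_intervals hGint i3]
    _ = ∫ t in (0:ℝ)..1, G t := by rw [hz2, add_zero]

lemma int01_legP (a b : Fin 3) :
    ∫ y in (0:ℝ)..1, legP a (2*y-1) * legP b (2*y-1)
      = if a = b then 1/(2*((a:ℕ):ℝ)+1) else 0 := by
  fin_cases a <;> fin_cases b
  · rw [intervalIntegral.integral_congr
        (g := fun y => (1:ℝ) + (0:ℝ)*y + (0:ℝ)*y^2 + (0:ℝ)*y^3 + (0:ℝ)*y^4)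
        (fun y _ => by simp only [legP]; ring),
      integral_quartic]
    norm_num [Fin.ext_iff]
  · rw [intervalIntegral.integral_congr
        (g := fun y => (-1:ℝ) + (2:ℝ)*y + (0:ℝ)*y^2 + (0:ℝ)*y^3 + (0:ℝ)*y^4)
        (fun y _ => by simp only [legP]; ring),
      integral_quartic]
    norm_num [Fin.ext_iff]
  · rw [intervalIntegral.integral_congr
        (g := fun y => (1:ℝ) + (-6:ℝ)*y + (6:ℝ)*y^2 + (0:ℝ)*y^3 + (0:ℝ)*y^4)
        (fun y _ => by simp only [legP]; ring),
      integral_quartic]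
    norm_num [Fin.ext_iff]
  · rw [intervalIntegral.integral_congr
        (g := fun y => (-1:ℝ) + (2:ℝ)*y + (0:ℝ)*y^2 + (0:ℝ)*y^3 + (0:ℝ)*y^4)
        (fun y _ => by simp only [legP]; ring),
      integral_quartic]
    norm_num [Fin.ext_iff]
  · rw [intervalIntegral.integral_congr
        (g := fun y => (1:ℝ) + (-4:ℝ)*y + (4:ℝ)*y^2 + (0:ℝ)*y^3 + (0:ℝ)*y^4)
        (fun y _ => by simp only [legP]; ring),
      integral_quartic]
    norm_num [Fin.ext_iff]
  · rw [intervalIntegral.integral_congr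
        (g := fun y => (-1:ℝ) + (8:ℝ)*y + (-18:ℝ)*y^2 + (12:ℝ)*y^3 + (0:ℝ)*y^4)
        (fun y _ => by simp only [legP]; ring),
      integral_quartic]
    norm_num [Fin.ext_iff]
  · rw [intervalIntegral.integral_congr
        (g := fun y => (1:ℝ) + (-6:ℝ)*y + (6:ℝ)*y^2 + (0:ℝ)*y^3 + (0:ℝ)*y^4)
        (fun y _ => by simp only [legP]; ring),
      integral_quartic]
    norm_num [Fin.ext_iff]
  · rw [intervalIntegral.integral_congr
        (g := fun y => (-1:ℝ) + (8:ℝ)*y + (-18:ℝ)*y^2 + (12:ℝ)*y^3 + (0:ℝ)*y^4)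
        (fun y _ => by simp only [legP]; ring),
      integral_quartic]
    norm_num [Fin.ext_iff]
  · rw [intervalIntegral.integral_congr
        (g := fun y => (1:ℝ) + (-12:ℝ)*y + (48:ℝ)*y^2 + (-72:ℝ)*y^3 + (36:ℝ)*y^4)
        (fun y _ => by simp only [legP]; ring),
      integral_quartic]
    norm_num [Fin.ext_iff]

lemma mw_zero_zero (i i' : Fin 3) (j j' : ℕ) :
    ∫ y in (0:ℝ)..1, multiwavelet 0 j i y * multiwavelet 0 j' i' y
      = if i = i' then 1 else 0 := by
  have h : ∀ y:ℝ, multiwavelet 0 j i y * multiwavelet 0 j' i' y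
      = (Real.sqrt (2*((i:ℕ):ℝ)+1) * Real.sqrt (2*((i':ℕ):ℝ)+1))
          * (legP i (2*y-1) * legP i' (2*y-1)) := by
    intro y; simp only [multiwavelet, eq_self_iff_true, if_true]; ring
  rw [intervalIntegral.integral_congr (fun y _ => h y),
    intervalIntegral.integral_const_mul, int01_legP]
  rcases eq_or_ne i i' with rfl | hne
  · simp only [if_pos rfl, eq_self_iff_true, if_true]
    rw [Real.mul_self_sqrt (by positivity)]
    have hne0 : (2*((i:ℕ):ℝ)+1) ≠ 0 := by positivity
    field_simp
  · simp [hne]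

lemma legP_quad (i : Fin 3) : ∃ d₀ d₁ d₂ : ℝ, ∀ y, legP i y = d₀ + d₁*y + d₂*y^2 := by
  fin_cases i
  exacts [⟨1,0,0, fun y => by simp [legP]⟩, ⟨0,1,0, fun y => by simp [legP]⟩,
    ⟨-1/2,0,3/2, fun y => by simp [legP]; ring⟩]

lemma alpert_quad (i : Fin 3) (n : ℤ) :
    ∃ c₀ c₁ c₂ : ℝ, ∀ s ∈ Set.Ioo ((n:ℝ)) ((n:ℝ)+1), alpert i s = c₀ + c₁*s + c₂*s^2 := by
  obtain ⟨b₀,b₁,b₂,hb⟩ := alpertBody_quad i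
  rcases eq_or_ne n 0 with rfl | h0
  · exact ⟨b₀,b₁,b₂, fun s hs => by
      rw [alpert_pos i (by simpa using hs), hb]⟩
  rcases eq_or_ne n (-1) with rfl | h1
  · refine ⟨(-1:ℝ)^((i:ℕ)+1)*b₀, -((-1:ℝ)^((i:ℕ)+1)*b₁), (-1:ℝ)^((i:ℕ)+1)*b₂,
      fun s hs => ?_⟩
    have hs' : s ∈ Set.Ioo (-1:ℝ) 0 := by
      constructor
      · simpa using hs.1
      · have := hs.2; push_cast at this; linarith
    rw [alpert_neg i hs', hb]; ring
  · refine ⟨0,0,0, fun s hs => ?_⟩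
    have hz : s ≤ -1 ∨ 1 ≤ s := by
      rcases lt_or_ge n 0 with hn | hn
      · left
        have hn2 : n ≤ -2 := by omega
        have : (n:ℝ) + 1 ≤ -1 := by
          have : ((n:ℤ):ℝ) ≤ ((-2:ℤ):ℝ) := by exact_mod_cast hn2
          push_cast at this; linarith
        linarith [hs.2]
      · right
        have hn1 : 1 ≤ n := by omega
        have : (1:ℝ) ≤ (n:ℝ) := by exact_mod_cast hn1
        linarith [hs.1]
    rw [alpert_zero i (Or.inl hz)]; ring

lemma mw_comp_quad (ℓ j : ℕ) (i : Fin 3) (ℓ' j' : ℕ) (hlt : ℓ < ℓ') :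
    ∃ c₀ c₁ c₂ : ℝ, ∀ t ∈ Set.Ioo (0:ℝ) 1,
      multiwavelet ℓ j i ((t + (j':ℝ)) / (2:ℝ)^(ℓ'-1)) = c₀ + c₁*t + c₂*t^2 := by
  rcases Nat.eq_zero_or_pos ℓ with rfl | hℓ
  · obtain ⟨d₀,d₁,d₂,hd⟩ := legP_quad i
    set A : ℝ := ((2:ℝ)^(ℓ'-1))⁻¹ with hA
    refine ⟨Real.sqrt (2*((i:ℕ):ℝ)+1) * (d₀ + d₁*(2*(j':ℝ)*A - 1) + d₂*(2*(j':ℝ)*A-1)^2),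
      Real.sqrt (2*((i:ℕ):ℝ)+1) * (d₁*(2*A) + d₂*2*(2*A)*(2*(j':ℝ)*A-1)),
      Real.sqrt (2*((i:ℕ):ℝ)+1) * (d₂*(2*A)^2), fun t _ => ?_⟩
    simp only [multiwavelet, eq_self_iff_true, if_true]
    rw [hd]
    have harg : 2 * ((t + (j':ℝ)) / (2:ℝ)^(ℓ'-1)) - 1 = (2*A)*t + (2*(j':ℝ)*A - 1) := by
      rw [hA, div_eq_mul_inv]; ring
    rw [harg]; ring
  · have hℓ0 : ℓ ≠ 0 := by omega
    have hm' : ℓ' - 1 = (ℓ-1) + 1 + (ℓ' - ℓ - 1) := by omega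
    set d : ℕ := ℓ' - ℓ - 1 with hd
    set q : ℕ := j' / 2^d with hq
    set P : ℝ := (2:ℝ)^d with hP
    have hPpos : 0 < P := by positivity
    set α : ℝ := P⁻¹ with hα
    have hαpos : 0 < α := by positivity
    have hαP : α * P = 1 := inv_mul_cancel₀ (ne_of_gt hPpos)
    have hq1 : (q:ℝ) * P ≤ (j':ℝ) := by
      rw [hP]; exact_mod_cast Nat.div_mul_le_self j' (2^d)
    have hq2 : (j':ℝ) + 1 ≤ ((q:ℝ)+1) * P := by
      have h2 : j' + 1 ≤ 2^d * (q + 1) := Nat.lt_mul_div_succ j' (by positivity)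
      calc (j':ℝ)+1 = ((j'+1 : ℕ):ℝ) := by push_cast; ring
        _ ≤ ((2^d * (q+1) : ℕ):ℝ) := by exact_mod_cast h2
        _ = ((q:ℝ)+1) * P := by rw [hP]; push_cast; ring
    set n : ℤ := (q:ℤ) - 2*(j:ℤ) - 1 with hn
    obtain ⟨b₀,b₁,b₂,hb⟩ := alpert_quad i n
    set β : ℝ := α*(j':ℝ) - 2*(j:ℝ) - 1 with hβ
    have harg : ∀ t : ℝ, 2 * ((2:ℝ)^(ℓ-1) * ((t + (j':ℝ)) / (2:ℝ)^(ℓ'-1)) - (j:ℝ)) - 1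
        = α*t + β := by
      intro t
      have hsplit : (2:ℝ)^(ℓ'-1) = (2:ℝ)^(ℓ-1) * 2 * P := by
        rw [hP, hm', pow_add, pow_add]; ring
      rw [hsplit, hβ, hα]
      have h1 : (2:ℝ)^(ℓ-1) ≠ 0 := by positivity
      field_simp
      ring
    have hmem : ∀ t ∈ Set.Ioo (0:ℝ) 1, α*t + β ∈ Set.Ioo ((n:ℝ)) ((n:ℝ)+1) := by
      intro t ht
      have e1 : α * ((q:ℝ) * P) = (q:ℝ) := by
        rw [hα]; field_simp
      have e2 : α * (((q:ℝ)+1) * P) = (q:ℝ)+1 := by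
        rw [hα]; field_simp
      have l1 := mul_le_mul_of_nonneg_left hq1 hαpos.le
      have l2 := mul_le_mul_of_nonneg_left hq2 hαpos.le
      have l3 := mul_pos hαpos ht.1
      have l4 := mul_lt_mul_of_pos_left ht.2 hαpos
      have hncast : (n:ℝ) = (q:ℝ) - 2*(j:ℝ) - 1 := by rw [hn]; push_cast; ring
      constructor
      · rw [hncast, hβ]; nlinarith [l1, e1, l3]
      · rw [hncast, hβ]; nlinarith [l2, e2, l4]
    refine ⟨((2:ℝ)^(((ℓ:ℝ)-1)/2) * Real.sqrt 2) * (b₀ + b₁*β + b₂*β^2),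
      ((2:ℝ)^(((ℓ:ℝ)-1)/2) * Real.sqrt 2) * (b₁*α + 2*b₂*α*β),
      ((2:ℝ)^(((ℓ:ℝ)-1)/2) * Real.sqrt 2) * (b₂*α^2), fun t ht => ?_⟩
    simp only [multiwavelet, if_neg hℓ0, gammaW]
    rw [harg t, hb _ (hmem t ht)]
    ring

lemma setIoo_eq (f : ℝ → ℝ) :
    ∫ y in Set.Ioo (0:ℝ) 1, f y = ∫ y in (0:ℝ)..1, f y := by
  rw [intervalIntegral.integral_of_le zero_le_one, integral_Ioc_eq_integral_Ioo]

lemma key_le (ℓ ℓ' j j' : ℕ) (i i' : Fin 3)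
    (hj0 : ℓ = 0 → j = 0) (hj : 1 ≤ ℓ → j < 2 ^ (ℓ - 1))
    (hj0' : ℓ' = 0 → j' = 0) (hj' : 1 ≤ ℓ' → j' < 2 ^ (ℓ' - 1)) (hle : ℓ ≤ ℓ') :
    (∫ y in Set.Ioo (0 : ℝ) 1, multiwavelet ℓ j i y * multiwavelet ℓ' j' i' y) =
      (if i = i' then (1 : ℝ) else 0) * (if ℓ = ℓ' then 1 else 0) *
        (if j = j' then 1 else 0) := by
  rw [setIoo_eq]
  rcases Nat.eq_zero_or_pos ℓ' with rfl | hℓ'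
  · have hℓ : ℓ = 0 := Nat.le_zero.mp hle
    subst hℓ
    rw [hj0 rfl, hj0' rfl, mw_zero_zero]
    simp
  · have hℓ'0 : ℓ' ≠ 0 := by omega
    have hj'lt : j' < 2^(ℓ'-1) := hj' hℓ'
    rcases eq_or_ne ℓ ℓ' with rfl | hne
    · -- same level, ≥ 1
      have hjlt : j < 2^(ℓ-1) := hj hℓ'
      rcases eq_or_ne j j' with rfl | hjne
      · -- same translate
        have hfun : ∀ y:ℝ, multiwavelet ℓ j i y * multiwavelet ℓ j i' y
            = (fun t => ((2:ℝ)^(((ℓ:ℝ)-1)/2) * (2:ℝ)^(((ℓ:ℝ)-1)/2))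
                * (gammaW i t * gammaW i' t)) ((2:ℝ)^(ℓ-1) * y - (j:ℝ)) := by
          intro y; simp only [multiwavelet, if_neg hℓ'0]; ring
        rw [intervalIntegral.integral_congr (fun y _ => hfun y),
          reduce_to_unit _ _ hjlt _
            (fun t ht => by rw [gammaW_zero i ht]; ring)
            (intervalIntegrable_gammaW_mul i i' _ 0 1),
          intervalIntegral.integral_const_mul, gammaW_orthonormal]
        have hee : (2:ℝ)^(((ℓ:ℝ)-1)/2) * (2:ℝ)^(((ℓ:ℝ)-1)/2) = (2:ℝ)^(ℓ-1) := by
          rw [← Real.rpow_add (by norm_num : (0:ℝ) < 2)]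
          rw [show ((ℓ:ℝ)-1)/2 + ((ℓ:ℝ)-1)/2 = (((ℓ-1 : ℕ)):ℝ) by
            rw [Nat.cast_sub hℓ']; push_cast; ring]
          exact Real.rpow_natCast 2 (ℓ-1)
        rw [hee]
        have hne0 : ((2:ℝ)^(ℓ-1)) ≠ 0 := by positivity
        rcases eq_or_ne i i' with rfl | hii
        · simp only [if_pos rfl, eq_self_iff_true, if_true, mul_one]
          field_simp
        · simp [hii]
      · -- different translates: pointwise zero
        have hzero : ∀ y:ℝ, multiwavelet ℓ j i y * multiwavelet ℓ j' i' y = 0 := by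
          intro y
          simp only [multiwavelet, if_neg hℓ'0]
          rcases le_or_gt ((2:ℝ)^(ℓ-1) * y - (j:ℝ)) 0 with h | h
          · rw [gammaW_zero i (Or.inl h)]; ring
          rcases le_or_gt 1 ((2:ℝ)^(ℓ-1) * y - (j:ℝ)) with h2 | h2
          · rw [gammaW_zero i (Or.inr h2)]; ring
          · have h3 : ((2:ℝ)^(ℓ-1) * y - (j':ℝ) ≤ 0) ∨ 1 ≤ (2:ℝ)^(ℓ-1) * y - (j':ℝ) := by
              rcases lt_or_gt_of_ne hjne with hlt | hgt
              · left
                have : (j:ℝ) + 1 ≤ (j':ℝ) := by exact_mod_cast hlt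
                linarith
              · right
                have : (j':ℝ) + 1 ≤ (j:ℝ) := by exact_mod_cast hgt
                linarith
            rcases h3 with h3 | h3
            · rw [gammaW_zero i' (Or.inl h3)]; ring
            · rw [gammaW_zero i' (Or.inr h3)]; ring
        rw [intervalIntegral.integral_congr (g := fun _ => 0) (fun y _ => hzero y)]
        simp [hjne]
    · -- strictly finer level: cross terms vanish
      have hlt : ℓ < ℓ' := lt_of_le_of_ne hle hne
      obtain ⟨c₀,c₁,c₂,hc⟩ := mw_comp_quad ℓ j i ℓ' j' hlt
      set G : ℝ → ℝ := fun t => multiwavelet ℓ j i ((t + (j':ℝ)) / (2:ℝ)^(ℓ'-1))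
          * ((2:ℝ)^(((ℓ':ℝ)-1)/2) * gammaW i' t) with hG
      have hfun : ∀ y:ℝ, multiwavelet ℓ j i y * multiwavelet ℓ' j' i' y
          = G ((2:ℝ)^(ℓ'-1) * y - (j':ℝ)) := by
        intro y
        have hP : ((2:ℝ)^(ℓ'-1)) ≠ 0 := by positivity
        have harg : (((2:ℝ)^(ℓ'-1) * y - (j':ℝ)) + (j':ℝ)) / (2:ℝ)^(ℓ'-1) = y := by
          field_simp
          ring
        have h2 : multiwavelet ℓ' j' i' y
            = (2:ℝ)^(((ℓ':ℝ)-1)/2) * gammaW i' ((2:ℝ)^(ℓ'-1)*y - (j':ℝ)) := by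
          simp only [multiwavelet, if_neg hℓ'0]
        rw [hG]
        simp only [harg]
        rw [h2]
      have hGz : ∀ t, t ≤ 0 ∨ 1 ≤ t → G t = 0 := by
        intro t ht
        rw [hG]
        simp only
        rw [gammaW_zero i' ht]
        ring
      have hGint : IntervalIntegrable G MeasureTheory.volume 0 1 := by
        apply intervalIntegrable_congr_Ioo zero_le_one
          (g := fun t => (c₀+c₁*t+c₂*t^2) * ((2:ℝ)^(((ℓ':ℝ)-1)/2) * gammaW i' t))
          (fun t ht => by rw [hG]; simp only; rw [hc t ht])
        exact ((intervalIntegrable_gammaW i' 0 1).const_mul _).continuousOn_mul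
          (by fun_prop)
      rw [intervalIntegral.integral_congr (fun y _ => hfun y),
        reduce_to_unit _ _ hj'lt G hGz hGint]
      have hGzero : ∫ t in (0:ℝ)..1, G t = 0 := by
        rw [intInt_congr_Ioo zero_le_one
          (g := fun t => (2:ℝ)^(((ℓ':ℝ)-1)/2) * (gammaW i' t * (c₀+c₁*t+c₂*t^2)))
          (fun t ht => by rw [hG]; simp only; rw [hc t ht]; ring),
          intervalIntegral.integral_const_mul, gammaW_moment]
        ring
      rw [hGzero]
      simp [hne]


/-- The degree-2 multiwavelet family (shifted Legendre polynomials at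
level 0 together with scaled/shifted Alpert wavelets at levels `ℓ ≥ 1`) is orthonormal
in `L²(0,1)`: `∫₀¹ g^i_{ℓ,j} g^{i′}_{ℓ′,j′} dy = δ_{ii′} δ_{ℓℓ′} δ_{jj′}` for all
admissible level indices. -/
theorem multiwavelet_orthonormal
    (ℓ ℓ' j j' : ℕ) (i i' : Fin 3)
    (hj0 : ℓ = 0 → j = 0) (hj : 1 ≤ ℓ → j < 2 ^ (ℓ - 1))
    (hj0' : ℓ' = 0 → j' = 0) (hj' : 1 ≤ ℓ' → j' < 2 ^ (ℓ' - 1)) :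
    (∫ y in Set.Ioo (0 : ℝ) 1, multiwavelet ℓ j i y * multiwavelet ℓ' j' i' y) =
      (if i = i' then (1 : ℝ) else 0) * (if ℓ = ℓ' then 1 else 0) *
        (if j = j' then 1 else 0) := by
  rcases le_total ℓ ℓ' with hle | hle
  · exact key_le ℓ ℓ' j j' i i' hj0 hj hj0' hj' hle
  · have h := key_le ℓ' ℓ j' j i' i hj0' hj' hj0 hj hle
    have hswap : ∀ y:ℝ, multiwavelet ℓ j i y * multiwavelet ℓ' j' i' y
        = multiwavelet ℓ' j' i' y * multiwavelet ℓ j i y := fun y => mul_comm _ _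
    simp_rw [hswap]
    rw [h,
      show (if i' = i then (1:ℝ) else 0) = (if i = i' then (1:ℝ) else 0) by
        rcases eq_or_ne i i' with rfl | h1
        · simp
        · simp [h1, Ne.symm h1],
      show (if ℓ' = ℓ then (1:ℝ) else 0) = (if ℓ = ℓ' then (1:ℝ) else 0) by
        rcases eq_or_ne ℓ ℓ' with rfl | h2
        · simp
        · simp [h2, Ne.symm h2],
      show (if j' = j then (1:ℝ) else 0) = (if j = j' then (1:ℝ) else 0) by
        rcases eq_or_ne j j' with rfl | h3
        · simp
        · simp [h3, Ne.symm h3]]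
end
end

section
/- Fix a dimension d ≥ 1 and for N ∈ ℕ define S_d(N) := Σ_{ℓ ∈ ℕ₀^d, ℓ₁ + ⋯ + ℓ_d ≤ N} ∏_{m=1}^{d} max(1, 2^{ℓ_m − 1}). Then S_d(N) = Θ(2^N N^{d−1}); that is, there exist constants c, C > 0 (depending only on d) such that for all N ≥ 1, c · 2^N · N^{d−1} ≤ S_d(N) ≤ C · 2^N · N^{d−1}. -/
noncomputable  section

/-- `S_d(N) = Σ_{ℓ ∈ ℕ₀^d, ℓ₁+⋯+ℓ_d ≤ N} ∏_m max(1, 2^{ℓ_m − 1})`.  (Every multi-index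
with `|ℓ|₁ ≤ N` has all components `≤ N`, so the sum may be taken over
`ℓ : Fin d → Fin (N+1)`.) -/
def sparseGridCount (d N : ℕ) : ℕ :=
  ∑ ℓ : Fin d → Fin (N + 1),
    if (∑ m : Fin d, (ℓ m : ℕ)) ≤ N then
      ∏ m : Fin d, max 1 (2 ^ ((ℓ m : ℕ) - 1))
    else 0

private lemma sgc_term_le (a : ℕ) : max 1 (2 ^ (a - 1)) ≤ 2 ^ a :=
  max_le Nat.one_le_two_pow (Nat.pow_le_pow_right (by norm_num) (Nat.sub_le a 1))

private lemma sgc_term_ge (a : ℕ) : 2 ^ a ≤ 2 * max 1 (2 ^ (a - 1)) := by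
  cases a with
  | zero => simp
  | succ n =>
    calc 2 ^ (n + 1) = 2 * 2 ^ n := by ring
    _ ≤ 2 * max 1 (2 ^ n) := Nat.mul_le_mul le_rfl (le_max_right _ _)
    _ = 2 * max 1 (2 ^ (n + 1 - 1)) := by simp

private lemma sgc_geom (n : ℕ) : ∑ s ∈ Finset.range n, 2 ^ s ≤ 2 ^ n := by
  induction n with
  | zero => simp
  | succ n ih => rw [Finset.sum_range_succ, pow_succ]; omega

private lemma sgc_upper (m N : ℕ) (hN : 1 ≤ N) :
    sparseGridCount (m + 1) N ≤ 2 ^ (m + 1) * (2 ^ N * N ^ m) := by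
  classical
  set F : Finset (Fin (m + 1) → Fin (N + 1)) :=
    Finset.univ.filter (fun ℓ => (∑ i, (ℓ i : ℕ)) ≤ N) with hF
  have h1 : sparseGridCount (m + 1) N
      = ∑ ℓ ∈ F, ∏ i, max 1 (2 ^ ((ℓ i : ℕ) - 1)) := by
    rw [sparseGridCount, hF, Finset.sum_filter]
  -- card of each shell
  have hcard : ∀ s : ℕ,
      (F.filter (fun ℓ => (∑ i, (ℓ i : ℕ)) = s)).card ≤ (N + 1) ^ m := by
    intro s
    have hinj : Set.InjOn (fun ℓ : Fin (m + 1) → Fin (N + 1) => ℓ ∘ Fin.castSucc)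
        (F.filter (fun ℓ => (∑ i, (ℓ i : ℕ)) = s)) := by
      intro ℓ₁ h₁ ℓ₂ h₂ h
      simp only [Finset.coe_filter, Set.mem_setOf_eq, Finset.mem_filter] at h₁ h₂
      have hs₁ : (∑ i, (ℓ₁ i : ℕ)) = s := h₁.2
      have hs₂ : (∑ i, (ℓ₂ i : ℕ)) = s := h₂.2
      have hcs : ∀ j : Fin m, ℓ₁ j.castSucc = ℓ₂ j.castSucc := fun j => congrFun h j
      rw [Fin.sum_univ_castSucc] at hs₁ hs₂
      have hsum_eq : ∑ i : Fin m, (ℓ₁ i.castSucc : ℕ) = ∑ i : Fin m, (ℓ₂ i.castSucc : ℕ) :=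
        Finset.sum_congr rfl (fun j _ => by rw [hcs j])
      have hlast : (ℓ₁ (Fin.last m) : ℕ) = (ℓ₂ (Fin.last m) : ℕ) := by
        rw [hsum_eq] at hs₁
        exact Nat.add_left_cancel (hs₁.trans hs₂.symm)
      funext i
      refine Fin.lastCases ?_ ?_ i
      · exact Fin.ext hlast
      · exact hcs
    have := Finset.card_le_card_of_injOn (fun ℓ => ℓ ∘ Fin.castSucc)
      (fun ℓ _ => Finset.mem_univ _) hinj
    calc (F.filter (fun ℓ => (∑ i, (ℓ i : ℕ)) = s)).card
        ≤ (Finset.univ : Finset (Fin m → Fin (N + 1))).card := this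
      _ = (N + 1) ^ m := by simp [Finset.card_univ]
  calc sparseGridCount (m + 1) N
      = ∑ ℓ ∈ F, ∏ i, max 1 (2 ^ ((ℓ i : ℕ) - 1)) := h1
    _ ≤ ∑ ℓ ∈ F, 2 ^ (∑ i, (ℓ i : ℕ)) := by
        refine Finset.sum_le_sum fun ℓ _ => ?_
        calc ∏ i, max 1 (2 ^ ((ℓ i : ℕ) - 1)) ≤ ∏ i, 2 ^ (ℓ i : ℕ) :=
              Finset.prod_le_prod' fun i _ => sgc_term_le _
          _ = 2 ^ (∑ i, (ℓ i : ℕ)) := Finset.prod_pow_eq_pow_sum _ _ _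
    _ = ∑ s ∈ Finset.range (N + 1),
          ∑ ℓ ∈ F.filter (fun ℓ => (∑ i, (ℓ i : ℕ)) = s), 2 ^ (∑ i, (ℓ i : ℕ)) := by
        refine (Finset.sum_fiberwise_of_maps_to ?_ _).symm
        intro ℓ hℓ
        rw [hF, Finset.mem_filter] at hℓ
        exact Finset.mem_range.mpr (Nat.lt_succ_of_le hℓ.2)
    _ ≤ ∑ s ∈ Finset.range (N + 1), (N + 1) ^ m * 2 ^ s := by
        refine Finset.sum_le_sum fun s _ => ?_
        calc ∑ ℓ ∈ F.filter (fun ℓ => (∑ i, (ℓ i : ℕ)) = s), 2 ^ (∑ i, (ℓ i : ℕ))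
            ≤ (F.filter (fun ℓ => (∑ i, (ℓ i : ℕ)) = s)).card • 2 ^ s := by
              refine Finset.sum_le_card_nsmul _ _ _ fun ℓ hℓ => ?_
              rw [Finset.mem_filter] at hℓ
              rw [hℓ.2]
          _ = (F.filter (fun ℓ => (∑ i, (ℓ i : ℕ)) = s)).card * 2 ^ s := by rw [smul_eq_mul]
          _ ≤ (N + 1) ^ m * 2 ^ s := Nat.mul_le_mul_right _ (hcard s)
    _ = (N + 1) ^ m * ∑ s ∈ Finset.range (N + 1), 2 ^ s := (Finset.mul_sum _ _ _).symm
    _ ≤ (N + 1) ^ m * 2 ^ (N + 1) := Nat.mul_le_mul_left _ (sgc_geom _)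
    _ ≤ (2 * N) ^ m * 2 ^ (N + 1) :=
        Nat.mul_le_mul_right _ (Nat.pow_le_pow_left (show N + 1 ≤ 2 * N by linarith) m)
    _ = 2 ^ (m + 1) * (2 ^ N * N ^ m) := by ring

private lemma sgc_lower (m N : ℕ) (hN : 1 ≤ N) :
    2 ^ N * N ^ m ≤ 2 ^ (m + 1) * (m + 1) ^ m * sparseGridCount (m + 1) N := by
  classical
  set K := N / (m + 1) with hKdef
  have hK : K ≤ N := Nat.div_le_self _ _
  have hKN : (m + 1) * K ≤ N := by
    rw [hKdef]; exact Nat.mul_div_le N (m + 1)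
  have hN' : N ≤ (m + 1) * (K + 1) := by
    have h1 := Nat.div_add_mod N (m + 1)
    have h2 : N % (m + 1) < m + 1 := Nat.mod_lt N (by omega)
    calc N = (m + 1) * K + N % (m + 1) := by rw [hKdef]; omega
      _ ≤ (m + 1) * K + (m + 1) := by omega
      _ = (m + 1) * (K + 1) := by ring
  have hsum : ∀ a : Fin m → Fin (K + 1), ∑ j, (a j : ℕ) ≤ N := by
    intro a
    calc ∑ j, (a j : ℕ) ≤ ∑ _j : Fin m, K :=
          Finset.sum_le_sum fun j _ => Nat.lt_succ_iff.mp (a j).isLt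
      _ = m * K := by simp [Finset.sum_const, smul_eq_mul]
      _ ≤ (m + 1) * K := Nat.mul_le_mul_right K (Nat.le_succ m)
      _ ≤ N := hKN
  set e : (Fin m → Fin (K + 1)) → (Fin (m + 1) → Fin (N + 1)) := fun a =>
    Fin.snoc (fun j => Fin.castLE (by omega : K + 1 ≤ N + 1) (a j))
      ⟨N - ∑ j, (a j : ℕ), Nat.lt_succ_of_le (Nat.sub_le _ _)⟩ with he
  have hsumE : ∀ a, ∑ i, ((e a) i : ℕ) = N := by
    intro a
    have h1 : ∑ i : Fin m, ((e a) i.castSucc : ℕ) = ∑ j, (a j : ℕ) := by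
      simp [he, Fin.snoc_castSucc]
    have h2 : ((e a) (Fin.last m) : ℕ) = N - ∑ j, (a j : ℕ) := by
      simp [he, Fin.snoc_last]
    rw [Fin.sum_univ_castSucc, h1, h2]
    have := hsum a; omega
  have hinj : Function.Injective e := by
    intro a b hab
    funext j
    have h := congrFun hab (Fin.castSucc j)
    simp only [he, Fin.snoc_castSucc] at h
    exact Fin.ext (by simpa [Fin.ext_iff] using h)
  have hval : ∀ a, 2 ^ N ≤ 2 ^ (m + 1) * ∏ i, max 1 (2 ^ (((e a) i : ℕ) - 1)) := by
    intro a
    have hrw : (2 : ℕ) ^ (m + 1) * ∏ i, max 1 (2 ^ (((e a) i : ℕ) - 1))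
        = ∏ i : Fin (m + 1), (2 * max 1 (2 ^ (((e a) i : ℕ) - 1))) := by
      rw [Finset.prod_mul_distrib, Finset.prod_const]
      simp [Finset.card_univ]
    rw [hrw]
    calc 2 ^ N = 2 ^ (∑ i, ((e a) i : ℕ)) := by rw [hsumE a]
      _ = ∏ i, 2 ^ ((e a) i : ℕ) := (Finset.prod_pow_eq_pow_sum _ _ _).symm
      _ ≤ ∏ i, (2 * max 1 (2 ^ (((e a) i : ℕ) - 1))) :=
          Finset.prod_le_prod' fun i _ => sgc_term_ge _
  have hS : (K + 1) ^ m * 2 ^ N ≤ 2 ^ (m + 1) * sparseGridCount (m + 1) N := by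
    have himg : ∑ ℓ ∈ Finset.univ.image e,
        (if (∑ i, (ℓ i : ℕ)) ≤ N then ∏ i, max 1 (2 ^ ((ℓ i : ℕ) - 1)) else 0)
        ≤ sparseGridCount (m + 1) N := by
      rw [sparseGridCount]
      exact Finset.sum_le_sum_of_subset (Finset.subset_univ _)
    have himg2 : ∑ ℓ ∈ Finset.univ.image e,
        (if (∑ i, (ℓ i : ℕ)) ≤ N then ∏ i, max 1 (2 ^ ((ℓ i : ℕ) - 1)) else 0)
        = ∑ a : Fin m → Fin (K + 1),
            (if (∑ i, ((e a) i : ℕ)) ≤ N then ∏ i, max 1 (2 ^ (((e a) i : ℕ) - 1)) else 0) :=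
      Finset.sum_image (fun a _ b _ h => hinj h)
    calc (K + 1) ^ m * 2 ^ N = ∑ _a : Fin m → Fin (K + 1), 2 ^ N := by
          simp [Finset.sum_const, smul_eq_mul, Finset.card_univ]
      _ ≤ ∑ a : Fin m → Fin (K + 1),
            2 ^ (m + 1) * ∏ i, max 1 (2 ^ (((e a) i : ℕ) - 1)) :=
          Finset.sum_le_sum fun a _ => hval a
      _ = 2 ^ (m + 1) * ∑ a : Fin m → Fin (K + 1),
            ∏ i, max 1 (2 ^ (((e a) i : ℕ) - 1)) := (Finset.mul_sum _ _ _).symm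
      _ = 2 ^ (m + 1) * ∑ a : Fin m → Fin (K + 1),
            (if (∑ i, ((e a) i : ℕ)) ≤ N then ∏ i, max 1 (2 ^ (((e a) i : ℕ) - 1)) else 0) := by
          congr 1
          refine Finset.sum_congr rfl fun a _ => ?_
          rw [if_pos (by rw [hsumE a])]
      _ = 2 ^ (m + 1) * ∑ ℓ ∈ Finset.univ.image e,
            (if (∑ i, (ℓ i : ℕ)) ≤ N then ∏ i, max 1 (2 ^ ((ℓ i : ℕ) - 1)) else 0) := by
          rw [himg2]
      _ ≤ 2 ^ (m + 1) * sparseGridCount (m + 1) N := Nat.mul_le_mul_left _ himg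
  calc 2 ^ N * N ^ m ≤ 2 ^ N * ((m + 1) ^ m * (K + 1) ^ m) := by
        refine Nat.mul_le_mul_left _ ?_
        rw [← Nat.mul_pow]
        exact Nat.pow_le_pow_left hN' m
    _ = (m + 1) ^ m * ((K + 1) ^ m * 2 ^ N) := by ring
    _ ≤ (m + 1) ^ m * (2 ^ (m + 1) * sparseGridCount (m + 1) N) :=
        Nat.mul_le_mul_left _ hS
    _ = 2 ^ (m + 1) * (m + 1) ^ m * sparseGridCount (m + 1) N := by ring

/-- The number of hierarchical cells of the level-`N` sparse grid in
dimension `d ≥ 1` satisfies `S_d(N) = Θ(2^N N^{d−1})`: there are constants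
`c, C > 0` (depending only on `d`) with
`c 2^N N^{d−1} ≤ S_d(N) ≤ C 2^N N^{d−1}` for all `N ≥ 1`. -/
theorem sparseGridCount_asymptotics (d : ℕ) (hd : 1 ≤ d) :
    ∃ c C : ℝ, 0 < c ∧ 0 < C ∧ ∀ N : ℕ, 1 ≤ N →
      c * 2 ^ N * (N : ℝ) ^ (d - 1) ≤ (sparseGridCount d N : ℝ) ∧
        (sparseGridCount d N : ℝ) ≤ C * 2 ^ N * (N : ℝ) ^ (d - 1) := by
  obtain ⟨m, rfl⟩ : ∃ m, d = m + 1 := ⟨d - 1, by omega⟩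
  refine ⟨((2 : ℝ) ^ (m + 1) * ((m : ℝ) + 1) ^ m)⁻¹, 2 ^ (m + 1), by positivity,
    by positivity, fun N hN => ?_⟩
  have hu := sgc_upper m N hN
  have hl := sgc_lower m N hN
  have hu' : (sparseGridCount (m + 1) N : ℝ) ≤ 2 ^ (m + 1) * ((2 : ℝ) ^ N * (N : ℝ) ^ m) := by
    exact_mod_cast hu
  have hl' : (2 : ℝ) ^ N * (N : ℝ) ^ m
      ≤ (2 : ℝ) ^ (m + 1) * ((m : ℝ) + 1) ^ m * (sparseGridCount (m + 1) N : ℝ) := by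
    exact_mod_cast hl
  have hm : m + 1 - 1 = m := rfl
  have hpos : (0 : ℝ) < (2 : ℝ) ^ (m + 1) * ((m : ℝ) + 1) ^ m := by positivity
  constructor
  · rw [hm, mul_assoc, inv_mul_le_iff₀ hpos]
    calc (2 : ℝ) ^ N * (N : ℝ) ^ m
        ≤ (2 : ℝ) ^ (m + 1) * ((m : ℝ) + 1) ^ m * (sparseGridCount (m + 1) N : ℝ) := hl'
      _ = (2 : ℝ) ^ (m + 1) * ((m : ℝ) + 1) ^ m * (sparseGridCount (m + 1) N : ℝ) := rfl
  · rw [hm, mul_assoc]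
    exact hu'
end
end
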